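/- arXiv:2210.15181 — 11 statements merged into one kernel-verified Lean document; each statement's English description precedes it below -/
import Mathlib

section
/- In the discrete first-price auction with grid size ε > 0 and value v ≥ 0: if ε⌊v/ε⌋ ≠ v or v = 0, then the bid ε⌊v/ε⌋ is loss-averse and is the unique loss-averse bid; if ε⌊v/ε⌋ = v ≠ 0, then the bid v − ε is loss-averse and is the unique loss-averse bid. -/
/-- The set of nature states on which two actions `a`, `a'` give different utilities. -/
def diffStates {A N : Type*} (u : A → N → ℝ) (a a' : A) : Set N :=
  {η | u a η ≠ u a' η}

/-- The infimum (in the extended reals, so that the infimum over the empty set is `+∞`)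
of the utility of action `c` over a set `s` of nature states. -/
noncomputable def infOn {A N : Type*} (u : A → N → ℝ) (c : A) (s : Set N) : EReal :=
  ⨅ η ∈ s, (u c η : EReal)

/-- An action `a` is loss-averse if for every other action `a'`, over the set of nature states
where the two actions' utilities differ, the infimum of `a`'s utility is at least the infimum
of `a'`'s utility. -/
def LossAverse {A N : Type*} (u : A → N → ℝ) (a : A) : Prop :=
  ∀ a' : A, infOn u a' (diffStates u a a') ≤ infOn u a (diffStates u a a')

/-- The bid space of the discrete first-price auction with grid size `ε` and value `v`:
all grid points `ε·k` (`k ∈ ℕ`) that do not exceed `v`. -/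
def Bid (ε v : ℝ) : Set ℝ :=
  {x | (∃ k : ℕ, x = ε * k) ∧ x ≤ v}

/-- Utility in the discrete first-price auction with grid size `ε` and value `v`:
a nature state is either `some β` (the highest competing bid `β`) or `none` (no competing
bidder, so the agent always wins); the agent wins against `some β` iff `b > β`
(ties go to nature), and the utility is `v - b` upon winning and `0` otherwise. -/
noncomputable def dfpaU (ε v : ℝ) (b : Bid ε v) (η : Option (Bid ε v)) : ℝ :=
  match η with
  | none => v - (b : ℝ)
  | some β => if (β : ℝ) < (b : ℝ) then v - (b : ℝ) else 0

lemma infOn_le {A N : Type*} (u : A → N → ℝ) (c : A) (s : Set N) {η : N} (hη : η ∈ s) :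
    infOn u c s ≤ (u c η : EReal) := iInf₂_le η hη

lemma le_infOn {A N : Type*} (u : A → N → ℝ) (c : A) (s : Set N) {r : EReal}
    (h : ∀ η ∈ s, r ≤ (u c η : EReal)) : r ≤ infOn u c s := le_iInf₂ h

lemma bid_nonneg {ε v : ℝ} (hε : 0 < ε) (b : Bid ε v) : 0 ≤ (b : ℝ) := by
  obtain ⟨⟨k, hk⟩, _⟩ := b.2
  rw [hk]; positivity

lemma dfpaU_nonneg {ε v : ℝ} (b : Bid ε v) (η : Option (Bid ε v)) :
    0 ≤ dfpaU ε v b η := by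
  have := b.2.2
  rcases η with _ | β
  · simp [dfpaU]; linarith
  · simp only [dfpaU]; split
    · linarith
    · exact le_refl 0

lemma all_eq_case (ε v : ℝ) (bstar : Bid ε v) (hall : ∀ b : Bid ε v, b = bstar) :
    LossAverse (dfpaU ε v) bstar ∧
      ∀ b : Bid ε v, LossAverse (dfpaU ε v) b → b = bstar := by
  constructor
  · intro a'; rw [hall a']
  · intro b _; exact hall b

lemma core (ε v : ℝ) (hε : 0 < ε) (bstar : Bid ε v)
    (hlt : (bstar : ℝ) < v)
    (hmax : ∀ b : Bid ε v, (bstar : ℝ) < (b : ℝ) → (b : ℝ) = v) :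
    LossAverse (dfpaU ε v) bstar ∧
      ∀ b : Bid ε v, LossAverse (dfpaU ε v) b → b = bstar := by
  have hne0 : v - (bstar : ℝ) ≠ 0 := by linarith
  constructor
  · intro a'
    by_cases heq : a' = bstar
    · subst heq; exact le_refl _
    have hr : (a' : ℝ) ≠ (bstar : ℝ) := fun he => heq (Subtype.ext he)
    -- find witness η with u a' η = 0 and u bstar η = v - bstar
    have hwit : ∃ η : Option (Bid ε v), dfpaU ε v a' η = 0 ∧
        dfpaU ε v bstar η = v - (bstar : ℝ) := by
      rcases lt_or_gt_of_ne hr with hlt' | hgt'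
      · refine ⟨some a', ?_, ?_⟩
        · simp [dfpaU]
        · simp [dfpaU, hlt']
      · have hv' : (a' : ℝ) = v := hmax a' hgt'
        exact ⟨none, by simp [dfpaU, hv'], by simp [dfpaU]⟩
    obtain ⟨η, hu1, hu2⟩ := hwit
    have hmem : η ∈ diffStates (dfpaU ε v) bstar a' := by
      show dfpaU ε v bstar η ≠ dfpaU ε v a' η
      rw [hu1, hu2]; exact hne0
    calc infOn (dfpaU ε v) a' (diffStates (dfpaU ε v) bstar a')
        ≤ (dfpaU ε v a' η : EReal) := infOn_le _ _ _ hmem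
      _ = (0 : EReal) := by rw [hu1]; exact EReal.coe_zero
      _ ≤ infOn (dfpaU ε v) bstar (diffStates (dfpaU ε v) bstar a') := by
          apply le_infOn
          intro η' _
          exact_mod_cast EReal.coe_le_coe_iff.mpr (dfpaU_nonneg bstar η')
  · intro b hb
    by_contra hne
    have hr : (b : ℝ) ≠ (bstar : ℝ) := fun he => hne (Subtype.ext he)
    have h := hb bstar
    set D := diffStates (dfpaU ε v) b bstar with hD
    -- on D, bstar's utility is v - bstar
    have hlow : ((v - (bstar : ℝ) : ℝ) : EReal) ≤ infOn (dfpaU ε v) bstar D := by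
      apply le_infOn
      intro η hη
      rcases η with _ | β
      · simp [dfpaU]
      · by_cases hβ : (β : ℝ) < (bstar : ℝ)
        · simp [dfpaU, hβ]
        · exfalso
          apply hη
          show dfpaU ε v b (some β) = dfpaU ε v bstar (some β)
          have h2 : dfpaU ε v bstar (some β) = 0 := by simp [dfpaU, hβ]
          have h1 : dfpaU ε v b (some β) = 0 := by
            rcases lt_or_gt_of_ne hr with hlt' | hgt'
            · have : ¬ (β : ℝ) < (b : ℝ) := by push_neg at hβ ⊢; linarith
              simp [dfpaU, this]
            · have hbv : (b : ℝ) = v := hmax b hgt'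
              simp only [dfpaU]
              split
              · rw [hbv]; ring
              · rfl
          rw [h1, h2]
    -- inf of b's utility on D is ≤ 0
    have hup : infOn (dfpaU ε v) b D ≤ (0 : EReal) := by
      have hwit : ∃ η : Option (Bid ε v), dfpaU ε v b η = 0 ∧
          dfpaU ε v bstar η = v - (bstar : ℝ) := by
        rcases lt_or_gt_of_ne hr with hlt' | hgt'
        · exact ⟨some b, by simp [dfpaU], by simp [dfpaU, hlt']⟩
        · have hbv : (b : ℝ) = v := hmax b hgt'
          exact ⟨none, by simp [dfpaU, hbv], by simp [dfpaU]⟩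
      obtain ⟨η, hu1, hu2⟩ := hwit
      have hmem : η ∈ D := by
        show dfpaU ε v b η ≠ dfpaU ε v bstar η
        rw [hu1, hu2]; exact fun hh => hne0 hh.symm
      calc infOn (dfpaU ε v) b D ≤ (dfpaU ε v b η : EReal) := infOn_le _ _ _ hmem
        _ = (0 : EReal) := by rw [hu1]; exact EReal.coe_zero
    have : ((v - (bstar : ℝ) : ℝ) : EReal) ≤ ((0 : ℝ) : EReal) := by
      calc ((v - (bstar : ℝ) : ℝ) : EReal) ≤ infOn (dfpaU ε v) bstar D := hlow
        _ ≤ infOn (dfpaU ε v) b D := h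
        _ ≤ (0 : EReal) := hup
    have := EReal.coe_le_coe_iff.mp this
    linarith

/-- in the discrete first-price auction with grid size `ε > 0` and value `v ≥ 0`:
if `ε⌊v/ε⌋ ≠ v` or `v = 0` then the bid `ε⌊v/ε⌋` is loss-averse and is the unique loss-averse
bid; if `ε⌊v/ε⌋ = v ≠ 0` then the bid `v - ε` is loss-averse and is the unique loss-averse
bid. -/
theorem dfpa_lossAverse_unique (ε v : ℝ) (hε : 0 < ε) (hv : 0 ≤ v)
    (bstar : Bid ε v)
    (h1 : (ε * (⌊v / ε⌋ : ℝ) ≠ v ∨ v = 0) → (bstar : ℝ) = ε * (⌊v / ε⌋ : ℝ))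
    (h2 : ε * (⌊v / ε⌋ : ℝ) = v ∧ v ≠ 0 → (bstar : ℝ) = v - ε) :
    LossAverse (dfpaU ε v) bstar ∧
      ∀ b : Bid ε v, LossAverse (dfpaU ε v) b → b = bstar := by
  by_cases hv0 : v = 0
  · -- all bids are 0
    apply all_eq_case
    have key : ∀ b : Bid ε v, (b : ℝ) = 0 := fun b =>
      le_antisymm (hv0 ▸ b.2.2) (bid_nonneg hε b)
    intro b
    exact Subtype.ext ((key b).trans (key bstar).symm)
  · have hvpos : 0 < v := hv.lt_of_ne (Ne.symm hv0)
    by_cases hc : ε * (⌊v / ε⌋ : ℝ) = v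
    · have hb : (bstar : ℝ) = v - ε := h2 ⟨hc, hv0⟩
      apply core ε v hε bstar (by linarith)
      intro b hbgt
      obtain ⟨⟨k, hk⟩, hble⟩ := b.2
      -- bstar = ε * (⌊v/ε⌋ - 1)
      have hm : (⌊v / ε⌋ : ℝ) - 1 < (k : ℝ) := by
        have : ε * ((⌊v / ε⌋ : ℝ) - 1) < ε * k := by
          rw [← hk]; rw [hb] at hbgt; linarith [mul_comm ε ((⌊v / ε⌋ : ℝ)), hc]
        exact lt_of_mul_lt_mul_left this hε.le
      have hm' : ⌊v / ε⌋ ≤ (k : ℤ) := by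
        have : ⌊v / ε⌋ < (k : ℤ) + 1 := by exact_mod_cast (by linarith : (⌊v / ε⌋ : ℝ) < (k : ℝ) + 1)
        omega
      have : v ≤ (b : ℝ) := by
        rw [hk, ← hc]
        have : (⌊v / ε⌋ : ℝ) ≤ (k : ℝ) := by exact_mod_cast hm'
        nlinarith
      linarith
    · have hb : (bstar : ℝ) = ε * (⌊v / ε⌋ : ℝ) := h1 (Or.inl hc)
      apply core ε v hε bstar (lt_of_le_of_ne bstar.2.2 (hb ▸ hc))
      intro b hbgt
      exfalso
      obtain ⟨⟨k, hk⟩, hble⟩ := b.2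
      have hm : (⌊v / ε⌋ : ℝ) < (k : ℝ) := by
        have : ε * (⌊v / ε⌋ : ℝ) < ε * k := by rw [← hk, ← hb]; exact hbgt
        exact lt_of_mul_lt_mul_left this hε.le
      have hm' : ⌊v / ε⌋ + 1 ≤ (k : ℤ) := by
        have : ⌊v / ε⌋ < (k : ℤ) := by exact_mod_cast hm
        omega
      have hfl : v < ε * ((⌊v / ε⌋ : ℝ) + 1) := by
        have := Int.lt_floor_add_one (v / ε)
        rw [div_lt_iff₀ hε] at this
        linarith [this]
      have : ε * ((⌊v / ε⌋ : ℝ) + 1) ≤ (b : ℝ) := by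
        rw [hk]
        have : (⌊v / ε⌋ : ℝ) + 1 ≤ (k : ℝ) := by exact_mod_cast hm'
        nlinarith
      linarith
end

section
/- In the discrete first-price auction with grid size ε > 0 and value v ≥ 0, with mixed actions, the point-mass (Dirac) mixed action at b*(v) is loss-averse and is the unique loss-averse mixed action, where b*(v) = ε⌊v/ε⌋ if ε⌊v/ε⌋ ≠ v or v = 0, and b*(v) = v − ε if ε⌊v/ε⌋ = v ≠ 0. -/
/-- An action `a` is loss-averse among the actions satisfying `P` if for every other action
`a'` with `P a'`, over the set of nature states where the two actions' utilities differ,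
the infimum of `a`'s utility is at least the infimum of `a'`'s utility. -/
def LossAverseOn {A N : Type*} (P : A → Prop) (u : A → N → ℝ) (a : A) : Prop :=
  ∀ a' : A, P a' → infOn u a' (diffStates u a a') ≤ infOn u a (diffStates u a a')

/-- A mixed action is a finitely supported real-valued weight function on the bid space
which is nonnegative and sums to one. -/
def IsMixed {ε v : ℝ} (p : ↥(Bid ε v) →₀ ℝ) : Prop :=
  (∀ b, 0 ≤ p b) ∧ p.sum (fun _ w => w) = 1

/-- The expected utility of a mixed action at a (pure) nature state. -/
noncomputable def mixU (ε v : ℝ) (p : ↥(Bid ε v) →₀ ℝ) (η : Option ↥(Bid ε v)) : ℝ :=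
  p.sum fun b w => w * dfpaU ε v b η

/-- in the discrete first-price auction with grid size `ε > 0` and value `v ≥ 0`,
with mixed actions, the point-mass (Dirac) mixed action at `b*(v)` is loss-averse and is the
unique loss-averse mixed action, where `b*(v) = ε⌊v/ε⌋` if `ε⌊v/ε⌋ ≠ v` or `v = 0`, and
`b*(v) = v - ε` if `ε⌊v/ε⌋ = v ≠ 0`. -/
theorem dfpa_mixed_lossAverse_unique (ε v : ℝ) (hε : 0 < ε) (hv : 0 ≤ v)
    (bstar : Bid ε v)
    (h1 : (ε * (⌊v / ε⌋ : ℝ) ≠ v ∨ v = 0) → (bstar : ℝ) = ε * (⌊v / ε⌋ : ℝ))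
    (h2 : ε * (⌊v / ε⌋ : ℝ) = v ∧ v ≠ 0 → (bstar : ℝ) = v - ε) :
    LossAverseOn IsMixed (mixU ε v) (Finsupp.single bstar 1) ∧
      ∀ p : ↥(Bid ε v) →₀ ℝ, IsMixed p → LossAverseOn IsMixed (mixU ε v) p →
        p = Finsupp.single bstar 1 := by
  classical
  -- basic facts about bids
  have hbpos : ∀ b : ↥(Bid ε v), 0 ≤ (b : ℝ) := by
    rintro ⟨b, ⟨k, rfl⟩, hb⟩
    positivity
  have hblev : ∀ b : ↥(Bid ε v), (b : ℝ) ≤ v := fun b => b.2.2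
  -- grid step lemma
  have hgrid : ∀ b b' : ↥(Bid ε v), (b : ℝ) < (b' : ℝ) → (b : ℝ) + ε ≤ (b' : ℝ) := by
    rintro ⟨b, ⟨k, rfl⟩, hb⟩ ⟨b', ⟨k', rfl⟩, hb'⟩ hlt
    simp only at hlt ⊢
    have hk : k < k' := by
      by_contra h
      push_neg at h
      have : (k' : ℝ) ≤ (k : ℝ) := by exact_mod_cast h
      nlinarith
    have : (k : ℝ) + 1 ≤ (k' : ℝ) := by exact_mod_cast hk
    nlinarith
  -- the key structural lemma: any bid strictly above bstar equals v
  have L1 : ∀ b : ↥(Bid ε v), (bstar : ℝ) < (b : ℝ) → (b : ℝ) = v := by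
    rintro ⟨b, ⟨k, rfl⟩, hbv'⟩ hlt
    simp only at hlt hbv' ⊢
    have hkfl : (k : ℤ) ≤ ⌊v / ε⌋ := by
      rw [Int.le_floor]
      rw [le_div_iff₀ hε]
      push_cast
      linarith
    by_cases hM : ε * (⌊v / ε⌋ : ℝ) = v ∧ v ≠ 0
    · have hb := h2 hM
      rw [hb] at hlt
      have hMv := hM.1
      have h3 : ((⌊v / ε⌋ : ℝ)) - 1 < (k : ℝ) := by nlinarith
      have h4 : (⌊v / ε⌋ : ℤ) - 1 < (k : ℤ) := by exact_mod_cast (by push_cast; linarith : ((⌊v / ε⌋ - 1 : ℤ) : ℝ) < ((k : ℤ) : ℝ))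
      have h5 : (k : ℤ) = ⌊v / ε⌋ := by omega
      have h6 : (k : ℝ) = (⌊v / ε⌋ : ℝ) := by exact_mod_cast h5
      rw [h6]
      linarith
    · have hb : (bstar : ℝ) = ε * (⌊v / ε⌋ : ℝ) := by
        apply h1
        by_cases hA : ε * (⌊v / ε⌋ : ℝ) = v
        · right
          by_contra hv0
          exact hM ⟨hA, hv0⟩
        · left; exact hA
      rw [hb] at hlt
      have h3 : (⌊v / ε⌋ : ℝ) < (k : ℝ) := by nlinarith
      have h4 : (⌊v / ε⌋ : ℤ) < (k : ℤ) := by exact_mod_cast h3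
      omega
  -- bstar is below v when v ≠ 0
  have hvlt : v ≠ 0 → (bstar : ℝ) < v := by
    intro hv0
    by_cases hM : ε * (⌊v / ε⌋ : ℝ) = v
    · have hb := h2 ⟨hM, hv0⟩
      rw [hb]; linarith
    · have hb := h1 (Or.inl hM)
      have hfl : (⌊v / ε⌋ : ℝ) ≤ v / ε := Int.floor_le _
      have : ε * (⌊v / ε⌋ : ℝ) ≤ v := by
        rw [← le_div_iff₀' hε] at *
        linarith
      rw [hb]
      exact lt_of_le_of_ne this hM
  -- mixU of the Dirac measure
  have mixU_single : ∀ η, mixU ε v (Finsupp.single bstar 1) η = dfpaU ε v bstar η := by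
    intro η
    unfold mixU
    rw [Finsupp.sum_single_index (by simp), one_mul]
  have hδmixed : IsMixed (Finsupp.single bstar (1 : ℝ)) := by
    constructor
    · intro b
      rw [Finsupp.single_apply]
      split <;> norm_num
    · rw [Finsupp.sum_single_index] <;> rfl
  -- Lemma A: any mixed action gets 0 at states some β with bstar ≤ β
  have LA : ∀ (q : ↥(Bid ε v) →₀ ℝ) (β : ↥(Bid ε v)), (bstar : ℝ) ≤ (β : ℝ) →
      mixU ε v q (some β) = 0 := by
    intro q β hβ
    unfold mixU
    apply Finset.sum_eq_zero
    intro b _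
    simp only [dfpaU]
    split
    · rw [L1 b (lt_of_le_of_lt hβ (by assumption))]
      simp
    · simp
  -- value of mixU at `none`
  have Lnone : ∀ q : ↥(Bid ε v) →₀ ℝ, IsMixed q →
      mixU ε v q none = v - q.sum (fun b w => w * (b : ℝ)) := by
    intro q hq
    unfold mixU
    have h1' : (q.sum fun b w => w * dfpaU ε v b none) =
        q.sum fun b w => w * v - w * (b : ℝ) := by
      apply Finsupp.sum_congr
      intro b _
      simp only [dfpaU]
      ring
    rw [h1', Finsupp.sum_sub]
    have h2' : (q.sum fun _ w => w * v) = v := by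
      rw [← Finsupp.sum_mul, hq.2, one_mul]
    rw [h2']
  -- nonnegativity of the expected bid
  have hss : ∀ q : ↥(Bid ε v) →₀ ℝ, IsMixed q → 0 ≤ q.sum (fun b w => w * (b : ℝ)) := by
    intro q hq
    apply Finset.sum_nonneg
    intro b _
    exact mul_nonneg (hq.1 b) (hbpos b)
  -- a mixed action supported on {bstar} is the Dirac at bstar
  have mixed_eq_single : ∀ q : ↥(Bid ε v) →₀ ℝ, IsMixed q →
      (∀ b, q b ≠ 0 → b = bstar) → q = Finsupp.single bstar 1 := by
    intro q hq hsub
    have hsupp : q.support ⊆ {bstar} := by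
      intro b hb
      rw [Finset.mem_singleton]
      exact hsub b (Finsupp.mem_support_iff.1 hb)
    have hq2 : ∑ a ∈ q.support, q a = 1 := hq.2
    rw [Finset.sum_subset hsupp (by
      intro x _ hx
      exact Finsupp.notMem_support_iff.1 hx), Finset.sum_singleton] at hq2
    ext b
    by_cases hb : b = bstar
    · subst hb
      rw [hq2, Finsupp.single_eq_same]
    · have hb0 : q b = 0 := by
        by_contra h
        exact hb (hsub b h)
      rw [hb0, Finsupp.single_apply, if_neg (fun h => hb h.symm)]
  -- the weight at bstar is at most 1
  have hle1 : ∀ q : ↥(Bid ε v) →₀ ℝ, IsMixed q → q bstar ≤ 1 := by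
    intro q hq
    have hq2 : ∑ a ∈ q.support, q a = 1 := hq.2
    by_cases h : bstar ∈ q.support
    · have := Finset.single_le_sum (f := fun b => q b) (fun i _ => hq.1 i) h
      rw [hq2] at this
      exact this
    · rw [Finsupp.notMem_support_iff.1 h]
      norm_num
  -- a mixed action with weight 1 at bstar is the Dirac at bstar
  have single_of_one : ∀ q : ↥(Bid ε v) →₀ ℝ, IsMixed q → q bstar = 1 →
      q = Finsupp.single bstar 1 := by
    intro q hq hone
    apply mixed_eq_single q hq
    intro b hb
    by_contra hbne
    have hbsupp : b ∈ q.support := Finsupp.mem_support_iff.2 hb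
    have hstsupp : bstar ∈ q.support := Finsupp.mem_support_iff.2 (by rw [hone]; norm_num)
    have hsub : ({b, bstar} : Finset _) ⊆ q.support := by
      intro x hx
      rcases Finset.mem_insert.1 hx with rfl | hx
      · exact hbsupp
      · rw [Finset.mem_singleton.1 hx]; exact hstsupp
    have hsum := Finset.sum_le_sum_of_subset_of_nonneg hsub (fun i _ _ => hq.1 i)
    rw [Finset.sum_pair hbne] at hsum
    have hq2 : ∑ a ∈ q.support, q a = 1 := hq.2
    rw [hq2] at hsum
    have h3 := hq.1 b
    have : q b = 0 := by linarith
    exact hb this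
  -- for v = 0 every bid equals bstar
  have hall : v = 0 → ∀ b : ↥(Bid ε v), b = bstar := by
    intro h0 b
    apply Subtype.ext
    have h1' := hblev b
    have h2' := hbpos b
    have h3' := hblev bstar
    have h4' := hbpos bstar
    have h5' : (b : ℝ) = 0 := by linarith
    have h6' : (bstar : ℝ) = 0 := by linarith
    rw [h5', h6']
  -- if the expected bid is ≤ 0 and bstar = 0 then q is the Dirac at bstar
  have hsz : ∀ q : ↥(Bid ε v) →₀ ℝ, IsMixed q → q.sum (fun b w => w * (b : ℝ)) ≤ 0 →
      (bstar : ℝ) = 0 → q = Finsupp.single bstar 1 := by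
    intro q hq hle hb0
    apply mixed_eq_single q hq
    intro b hb
    have h0 : q.sum (fun b w => w * (b : ℝ)) = 0 := le_antisymm hle (hss q hq)
    have hz := (Finset.sum_eq_zero_iff_of_nonneg
      (fun i (_ : i ∈ q.support) => mul_nonneg (hq.1 i) (hbpos i))).1 h0
    have hb' : b ∈ q.support := Finsupp.mem_support_iff.2 hb
    have := hz b hb'
    rcases mul_eq_zero.1 this with h | h
    · exact absurd h hb
    · exact Subtype.ext (by rw [h, hb0])
  -- the candidate second-highest bid βm (when bstar ≠ 0)
  have hβmex : (bstar : ℝ) ≠ 0 → ∃ βm : ↥(Bid ε v), (βm : ℝ) = (bstar : ℝ) - ε := by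
    intro h0
    obtain ⟨⟨kst, hkst⟩, hbstarv⟩ := bstar.2
    have hk1 : 1 ≤ kst := by
      rcases Nat.eq_zero_or_pos kst with h | h
      · exfalso; apply h0; rw [hkst, h]; simp
      · exact h
    have hcast : ((kst - 1 : ℕ) : ℝ) = (kst : ℝ) - 1 := by
      push_cast [Nat.cast_sub hk1]; ring
    refine ⟨⟨ε * ((kst - 1 : ℕ) : ℝ), ⟨⟨kst - 1, rfl⟩, ?_⟩⟩, ?_⟩
    · rw [hcast]
      have : ε * ((kst : ℝ) - 1) ≤ ε * (kst : ℝ) := by nlinarith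
      rw [hkst] at hbstarv
      linarith
    · show ε * ((kst - 1 : ℕ) : ℝ) = (bstar : ℝ) - ε
      rw [hcast, hkst]; ring
  -- value of a mixed action at the state just below bstar
  have LB : ∀ (βm : ↥(Bid ε v)), (βm : ℝ) = (bstar : ℝ) - ε → ∀ q : ↥(Bid ε v) →₀ ℝ,
      mixU ε v q (some βm) = q bstar * (v - (bstar : ℝ)) := by
    intro βm hβm q
    unfold mixU
    show ∑ b ∈ q.support, q b * dfpaU ε v b (some βm) = _
    rw [Finset.sum_eq_single bstar]
    · simp only [dfpaU]
      rw [if_pos (by rw [hβm]; linarith)]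
    · intro b _ hbne
      simp only [dfpaU]
      split
      · have hlt : (βm : ℝ) < (b : ℝ) := by assumption
        have hge : (bstar : ℝ) ≤ (b : ℝ) := by
          have := hgrid βm b hlt
          rw [hβm] at this
          linarith
        have hne : (bstar : ℝ) ≠ (b : ℝ) := fun h => hbne (Subtype.ext h.symm)
        rw [L1 b (lt_of_le_of_ne hge hne)]
        simp
      · simp
    · intro h
      rw [Finsupp.notMem_support_iff.1 h]
      simp
  -- the Dirac value on any difference state is v - bstar
  have hδval : ∀ (q : ↥(Bid ε v) →₀ ℝ) (η : Option ↥(Bid ε v)),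
      mixU ε v (Finsupp.single bstar 1) η ≠ mixU ε v q η →
      mixU ε v (Finsupp.single bstar 1) η = v - (bstar : ℝ) := by
    intro q η hη
    match η with
    | none =>
      rw [mixU_single]
      rfl
    | some β =>
      by_cases hc : (β : ℝ) < (bstar : ℝ)
      · rw [mixU_single]
        simp only [dfpaU]
        rw [if_pos hc]
      · exfalso
        apply hη
        rw [LA _ β (le_of_not_gt hc), LA q β (le_of_not_gt hc)]
  constructor
  · -- Part 1: the Dirac at bstar is loss-averse
    intro p hp
    by_cases hveq : v = 0
    · rw [mixed_eq_single p hp (fun b _ => hall hveq b)]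
    by_cases hpd : p = Finsupp.single bstar 1
    · rw [hpd]
    have hbv' : (bstar : ℝ) < v := hvlt hveq
    by_cases hb0 : (bstar : ℝ) = 0
    · -- bstar = 0 : witness is `none`
      have hnone : (none : Option ↥(Bid ε v)) ∈
          diffStates (mixU ε v) (Finsupp.single bstar 1) p := by
        intro hn
        rw [mixU_single, Lnone p hp] at hn
        have : dfpaU ε v bstar none = v - (bstar : ℝ) := rfl
        rw [this] at hn
        exact hpd (hsz p hp (by linarith) hb0)
      have hA : infOn (mixU ε v) p (diffStates (mixU ε v) (Finsupp.single bstar 1) p) ≤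
          ((mixU ε v p none : ℝ) : EReal) := iInf₂_le none hnone
      have hB : mixU ε v p none ≤ v - (bstar : ℝ) := by
        rw [Lnone p hp, hb0]
        have := hss p hp
        linarith
      have hC : (((v - (bstar : ℝ)) : ℝ) : EReal) ≤
          infOn (mixU ε v) (Finsupp.single bstar 1)
            (diffStates (mixU ε v) (Finsupp.single bstar 1) p) := by
        apply le_iInf₂
        intro η hη
        rw [hδval p η hη]
      exact le_trans hA (le_trans (EReal.coe_le_coe_iff.2 hB) hC)
    · -- bstar ≠ 0 : witness is `some βm`
      obtain ⟨βm, hβm⟩ := hβmex hb0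
      have hmem : (some βm : Option ↥(Bid ε v)) ∈
          diffStates (mixU ε v) (Finsupp.single bstar 1) p := by
        intro hn
        rw [mixU_single, LB βm hβm p] at hn
        simp only [dfpaU] at hn
        rw [if_pos (by rw [hβm]; linarith)] at hn
        have hne : v - (bstar : ℝ) ≠ 0 := by linarith
        have hone : p bstar = 1 :=
          mul_right_cancel₀ hne (by rw [one_mul]; exact hn.symm)
        exact hpd (single_of_one p hp hone)
      have hA : infOn (mixU ε v) p (diffStates (mixU ε v) (Finsupp.single bstar 1) p) ≤
          ((mixU ε v p (some βm) : ℝ) : EReal) := iInf₂_le (some βm) hmem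
      have hB : mixU ε v p (some βm) ≤ v - (bstar : ℝ) := by
        rw [LB βm hβm p]
        exact mul_le_of_le_one_left (by linarith) (hle1 p hp)
      have hC : (((v - (bstar : ℝ)) : ℝ) : EReal) ≤
          infOn (mixU ε v) (Finsupp.single bstar 1)
            (diffStates (mixU ε v) (Finsupp.single bstar 1) p) := by
        apply le_iInf₂
        intro η hη
        rw [hδval p η hη]
      exact le_trans hA (le_trans (EReal.coe_le_coe_iff.2 hB) hC)
  · -- Part 2: uniqueness
    intro p hp hLAp
    by_cases hveq : v = 0
    · exact mixed_eq_single p hp (fun b _ => hall hveq b)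
    have hbv' : (bstar : ℝ) < v := hvlt hveq
    have hla := hLAp (Finsupp.single bstar 1) hδmixed
    by_cases hb0 : (bstar : ℝ) = 0
    · have key : v - (bstar : ℝ) ≤ mixU ε v p none := by
        by_cases hn : (none : Option ↥(Bid ε v)) ∈
            diffStates (mixU ε v) p (Finsupp.single bstar 1)
        · have h1' : (((v - (bstar : ℝ)) : ℝ) : EReal) ≤
              infOn (mixU ε v) (Finsupp.single bstar 1)
                (diffStates (mixU ε v) p (Finsupp.single bstar 1)) := by
            apply le_iInf₂
            intro η hη
            rw [hδval p η (Ne.symm hη)]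
          have h2' : infOn (mixU ε v) p (diffStates (mixU ε v) p (Finsupp.single bstar 1)) ≤
              ((mixU ε v p none : ℝ) : EReal) := iInf₂_le none hn
          exact EReal.coe_le_coe_iff.1 (le_trans h1' (le_trans hla h2'))
        · simp only [diffStates, Set.mem_setOf_eq, not_not] at hn
          rw [hn, mixU_single]
          rfl
      rw [Lnone p hp, hb0] at key
      exact hsz p hp (by linarith) hb0
    · obtain ⟨βm, hβm⟩ := hβmex hb0
      have hδβm : mixU ε v (Finsupp.single bstar 1) (some βm) = v - (bstar : ℝ) := by
        rw [mixU_single]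
        simp only [dfpaU]
        rw [if_pos (by rw [hβm]; linarith)]
      have key : v - (bstar : ℝ) ≤ p bstar * (v - (bstar : ℝ)) := by
        by_cases hn : (some βm : Option ↥(Bid ε v)) ∈
            diffStates (mixU ε v) p (Finsupp.single bstar 1)
        · have h1' : (((v - (bstar : ℝ)) : ℝ) : EReal) ≤
              infOn (mixU ε v) (Finsupp.single bstar 1)
                (diffStates (mixU ε v) p (Finsupp.single bstar 1)) := by
            apply le_iInf₂
            intro η hη
            rw [hδval p η (Ne.symm hη)]
          have h2' : infOn (mixU ε v) p (diffStates (mixU ε v) p (Finsupp.single bstar 1)) ≤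
              ((mixU ε v p (some βm) : ℝ) : EReal) := iInf₂_le (some βm) hn
          have h3' := EReal.coe_le_coe_iff.1 (le_trans h1' (le_trans hla h2'))
          rw [LB βm hβm p] at h3'
          exact h3'
        · simp only [diffStates, Set.mem_setOf_eq, not_not] at hn
          rw [LB βm hβm p] at hn
          rw [hn, hδβm]
      have hone : p bstar = 1 := by
        have hpos : 0 < v - (bstar : ℝ) := by linarith
        have hge : 1 ≤ p bstar := by nlinarith
        exact le_antisymm (hle1 p hp) hge
      exact single_of_one p hp hone
end

section
/- If a safety-level action exists, then every loss-averse action is a safety-level action: if some a' ∈ A satisfies u(a',η) ≥ sup_{a''∈A} inf_{η'∈N} u(a'',η') for all η ∈ N, and a is loss-averse, then u(a,η) ≥ sup_{a''∈A} inf_{η'∈N} u(a'',η') for all η ∈ N. -/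
/-- The safety level: `sup_{a ∈ A} inf_{η ∈ N} u(a,η)`, in the extended reals. -/
noncomputable def safetyLevel {A N : Type*} (u : A → N → ℝ) : EReal :=
  ⨆ a : A, ⨅ η : N, (u a η : EReal)

/-- if a safety-level action exists, then every loss-averse action is a
safety-level action. -/
theorem lossAverse_safety {A N : Type*} [Nonempty A] [Nonempty N] (u : A → N → ℝ)
    (a' : A) (h' : ∀ η : N, safetyLevel u ≤ (u a' η : EReal))
    (a : A) (ha : LossAverse u a) :
    ∀ η : N, safetyLevel u ≤ (u a η : EReal) := by
  intro η
  by_cases heq : u a η = u a' η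
  · rw [heq]; exact h' η
  · have hmem : η ∈ diffStates u a a' := heq
    calc safetyLevel u ≤ infOn u a' (diffStates u a a') := by
          exact le_iInf₂ fun η' _ => h' η'
      _ ≤ infOn u a (diffStates u a a') := ha a'
      _ ≤ (u a η : EReal) := iInf₂_le η hmem
end

section
/- If the nature-state set N is finite, then every multi-leximin action is a safety-level action. -/
/-- The vector (as a list) of the utilities `(u(a,η))_{η ∈ N}` of action `a`,
rearranged in nondecreasing order (`N` finite). -/
noncomputable def sVec {A N : Type*} [Fintype N] (u : A → N → ℝ) (a : A) : List ℝ :=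
  (Finset.univ.val.map (u a)).sort (· ≤ ·)

/-- An action `a` is multi-leximin if its nondecreasingly sorted utility vector is greater
than or equal to that of every other action in the lexicographic order. -/
def MultiLeximin {A N : Type*} [Fintype N] (u : A → N → ℝ) (a : A) : Prop :=
  ∀ a' : A, sVec u a' = sVec u a ∨ List.Lex (· < ·) (sVec u a') (sVec u a)

/- The first entry of the sorted vector `s(a)` is the worst-case utility of `a`, and the
lexicographic order compares first entries first: so a multi-leximin action `a` has
`min u(a', ·) ≤ s(a)₁ ≤ u(a, η)` for every action `a'` and state `η`. -/

section SortedUtilities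

variable {A N : Type*} [Fintype N] (u : A → N → ℝ)

theorem mem_sVec {a : A} {x : ℝ} : x ∈ sVec u a ↔ ∃ η, u a η = x := by
  simp [sVec, Multiset.mem_sort]

theorem head!_sVec_le (a : A) (η : N) : (sVec u a).head! ≤ u a η :=
  (Multiset.pairwise_sort _ _).head!_le ((mem_sVec u).2 ⟨η, rfl⟩)

theorem sVec_ne_nil [Nonempty N] (a : A) : sVec u a ≠ [] :=
  List.ne_nil_of_mem ((mem_sVec u).2 ⟨Classical.arbitrary N, rfl⟩)

theorem exists_eq_head!_sVec [Nonempty N] (a : A) : ∃ η, u a η = (sVec u a).head! :=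
  (mem_sVec u).1 (List.head!_mem_self (sVec_ne_nil u a))

theorem MultiLeximin.head!_sVec_le [Nonempty N] {a : A} (h : MultiLeximin u a) (a' : A) :
    (sVec u a').head! ≤ (sVec u a).head! :=
  (h a').elim (fun heq => heq ▸ le_rfl)
    (fun hlt => List.head!_le_of_lt _ _ hlt (sVec_ne_nil u a'))

end SortedUtilities

theorem multiLeximin_safety_general {A N : Type*} [Fintype N]
    (u : A → N → ℝ) (a : A) (h : MultiLeximin u a) :
    ∀ η : N, safetyLevel u ≤ (u a η : EReal) := by
  intro η
  have : Nonempty N := ⟨η⟩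
  refine iSup_le fun a' => ?_
  obtain ⟨η', hη'⟩ := exists_eq_head!_sVec u a'
  calc ⨅ η'' : N, (u a' η'' : EReal) ≤ u a' η' := iInf_le _ η'
    _ ≤ u a η := EReal.coe_le_coe_iff.2 <|
      hη' ▸ (h.head!_sVec_le u a').trans (head!_sVec_le u a η)

/-- if the nature-state set is finite, every multi-leximin action is a
safety-level action. -/
theorem multiLeximin_safety {A N : Type*} [Nonempty A] [Fintype N] [Nonempty N]
    (u : A → N → ℝ) (a : A) (h : MultiLeximin u a) :
    ∀ η : N, safetyLevel u ≤ (u a η : EReal) :=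
  multiLeximin_safety_general u a h
end

section
/- If the nature-state set N is finite, then every multi-leximin action is loss-averse. -/
namespace Multiset

variable {α : Type*} [LinearOrder α]

theorem sort_eq_filter_lt_append (s : Multiset α) (t : α) :
    s.sort = (s.filter (· < t)).sort ++
      (List.replicate (s.count t) t ++ (s.filter (t < ·)).sort) := by
  have hs : ((s.filter (· < t)).sort ++
      (List.replicate (s.count t) t ++ (s.filter (t < ·)).sort) : Multiset α) = s := by
    ext x
    simp only [← coe_add, sort_eq, count_add, count_filter]
    rcases lt_trichotomy x t with hx | rfl | hx
    · simp [hx, hx.ne, hx.not_gt]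
    · simp
    · simp [hx, hx.ne', hx.not_gt]
  have hsorted : ((s.filter (· < t)).sort ++
      (List.replicate (s.count t) t ++ (s.filter (t < ·)).sort)).Pairwise (· ≤ ·) := by
    simp only [List.pairwise_append, List.pairwise_replicate, pairwise_sort, List.mem_replicate,
      mem_sort, mem_filter, List.mem_append]
    refine ⟨trivial, ⟨Or.inr le_rfl, trivial, ?_⟩, ?_⟩
    · rintro _ ⟨-, rfl⟩ y ⟨-, hy⟩
      exact hy.le
    · rintro x ⟨-, hx⟩ y (⟨-, rfl⟩ | ⟨-, hy⟩)
      exacts [hx.le, (hx.trans hy).le]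
  conv_lhs => rw [← hs]
  rw [coe_sort, List.mergeSort_eq_self _ hsorted]

theorem lex_sort_of_filter_lt_eq {s s' : Multiset α} {t : α} (hcard : card s = card s')
    (hlow : s.filter (· < t) = s'.filter (· < t)) (hcount : s'.count t < s.count t) :
    List.Lex (· < ·) s.sort s'.sort := by
  have hlen := congrArg List.length (sort_eq_filter_lt_append s t)
  have hlen' := congrArg List.length (sort_eq_filter_lt_append s' t)
  simp only [List.length_append, List.length_replicate, length_sort] at hlen hlen'
  -- Equal sizes force `s'` to have an entry above `t` to make up for its missing copies of `t`.
  obtain ⟨c, cs, hcs⟩ := List.exists_cons_of_ne_nil (l := (s'.filter (t < ·)).sort) <| by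
    rw [hlow] at hlen
    rw [← List.length_pos_iff, length_sort]
    omega
  have htc : t < c := (mem_filter.1 ((mem_sort _).1 (hcs ▸ List.mem_cons_self))).2
  have hrep : List.replicate (s.count t) t =
      List.replicate (s'.count t) t ++ t :: List.replicate (s.count t - s'.count t - 1) t := by
    rw [← List.replicate_succ, ← List.replicate_add]
    congr 1
    omega
  rw [sort_eq_filter_lt_append s t, sort_eq_filter_lt_append s' t, hlow, hrep, hcs,
    List.append_assoc]
  exact List.Lex.append_left _ (List.Lex.append_left _ (List.Lex.rel htc) _) _

theorem lex_sort_add_of_lt {c d d' : Multiset α} {t : α} (ht : t ∈ d) (hd : ∀ x ∈ d, t ≤ x)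
    (hd' : ∀ x ∈ d', t < x) (hcard : card d = card d') :
    List.Lex (· < ·) (c + d).sort (c + d').sort := by
  refine lex_sort_of_filter_lt_eq (t := t) (by simp [hcard]) ?_ ?_
  · rw [filter_add, filter_add, filter_eq_nil.2 fun x hx => (hd x hx).not_gt,
      filter_eq_nil.2 fun x hx => (hd' x hx).not_gt]
  · have hzero : d'.count t = 0 := count_eq_zero.2 fun h => (hd' t h).false
    have hpos : 0 < d.count t := count_pos.2 ht
    rw [count_add, count_add]
    omega

end Multiset

open Multiset in
theorem lex_sort_map_of_lt_of_ne {N α : Type*} [Fintype N] [LinearOrder α] {f g : N → α}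
    {η₀ : N} (h₀ : f η₀ ≠ g η₀) (hf : ∀ η, f η ≠ g η → f η₀ ≤ f η)
    (hg : ∀ η, f η ≠ g η → f η₀ < g η) :
    List.Lex (· < ·) (Finset.univ.val.map f).sort (Finset.univ.val.map g).sort := by
  have hsplit := filter_add_not (fun η => f η = g η) Finset.univ.val
  have hagree : (Finset.univ.val.filter fun η => f η = g η).map f =
      (Finset.univ.val.filter fun η => f η = g η).map g :=
    map_congr rfl fun η hη => (mem_filter.1 hη).2
  rw [← hsplit, map_add, map_add, hagree]
  refine lex_sort_add_of_lt (t := f η₀) ?_ ?_ ?_ (by simp only [card_map])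
  · exact mem_map.2 ⟨η₀, mem_filter.2 ⟨Finset.mem_univ_val _, h₀⟩, rfl⟩
  · simp only [mem_map, mem_filter, forall_exists_index, and_imp]
    rintro _ η - hη rfl
    exact hf η hη
  · simp only [mem_map, mem_filter, forall_exists_index, and_imp]
    rintro _ η - hη rfl
    exact hg η hη

theorem multiLeximin_lossAverse_general {A N : Type*} [Fintype N]
    (u : A → N → ℝ) (a : A) (h : MultiLeximin u a) :
    LossAverse u a := by
  intro a'
  by_contra! hlt
  set D := diffStates u a a'
  have hD : D.Nonempty := by
    by_contra hempty
    simp [Set.not_nonempty_iff_eq_empty.1 hempty, infOn] at hlt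
  obtain ⟨η₀, hη₀, hmin⟩ := D.exists_min_image (u a) D.toFinite hD
  have hgt : ∀ η ∈ D, u a η₀ < u a' η := by
    intro η hη
    by_contra! hle
    refine hlt.not_ge ?_
    calc infOn u a' D ≤ u a' η := iInf₂_le η hη
      _ ≤ u a η₀ := by exact_mod_cast hle
      _ ≤ infOn u a D := le_iInf₂ fun η' hη' => by exact_mod_cast hmin η' hη'
  have hlex : List.Lex (· < ·) (sVec u a) (sVec u a') := lex_sort_map_of_lt_of_ne hη₀ hmin hgt
  rcases h a' with heq | hlex'
  · exact asymm hlex (heq ▸ hlex)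
  · exact asymm hlex hlex'

/-- if the nature-state set is finite, every multi-leximin action is
loss-averse. -/
theorem multiLeximin_lossAverse {A N : Type*} [Nonempty A] [Fintype N] [Nonempty N]
    (u : A → N → ℝ) (a : A) (h : MultiLeximin u a) :
    LossAverse u a :=
  multiLeximin_lossAverse_general u a h
end

section
/- If the nature-state set N is finite and the set of safety-level actions is finite and nonempty, then a loss-averse action exists. -/
/-- if the nature-state set is finite and the set of safety-level actions is
finite and nonempty, then a loss-averse action exists. -/
theorem lossAverse_exists {A N : Type*} [Nonempty A] [Finite N] [Nonempty N]
    (u : A → N → ℝ)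
    (hfin : {a : A | ∀ η : N, safetyLevel u ≤ (u a η : EReal)}.Finite)
    (hne : {a : A | ∀ η : N, safetyLevel u ≤ (u a η : EReal)}.Nonempty) :
    ∃ a : A, LossAverse u a := by
  classical
  cases nonempty_fintype N
  set S : Finset A := hfin.toFinset with hSdef
  have hSmem : ∀ a, a ∈ S ↔ ∀ η : N, safetyLevel u ≤ (u a η : EReal) := by
    intro a; simp [hSdef, Set.Finite.mem_toFinset]
  have hSne : S.Nonempty := by
    obtain ⟨a, ha⟩ := hne
    exact ⟨a, (hSmem a).mpr ha⟩
  set n : ℕ := Fintype.card N with hn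
  have hn1 : 1 ≤ n := Fintype.card_pos
  set B : ℝ := (n : ℝ) + 1 with hBdef
  have hB1 : (1:ℝ) ≤ B := by
    have : (0:ℝ) ≤ (n:ℝ) := Nat.cast_nonneg n
    linarith
  set V : Finset ℝ := (S ×ˢ (Finset.univ : Finset N)).image (fun p => u p.1 p.2)
    with hVdef
  have hmemV : ∀ a ∈ S, ∀ η : N, u a η ∈ V := by
    intro a ha η
    exact Finset.mem_image.mpr ⟨⟨a, η⟩, Finset.mem_product.mpr ⟨ha, Finset.mem_univ η⟩, rfl⟩
  set g : ℝ → ℕ := fun x => (V.filter (fun v => x < v)).card with hgdef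
  set f : ℝ → ℝ := fun x => -(B ^ g x) with hfdef
  have hf_neg : ∀ x : ℝ, f x ≤ -1 := by
    intro x
    have : (1:ℝ) ≤ B ^ g x := one_le_pow₀ hB1
    simp only [hfdef]; linarith
  have hg_lt : ∀ x y : ℝ, x < y → y ∈ V → g y + 1 ≤ g x := by
    intro x y hxy hyV
    have hsub : insert y (V.filter (fun v => y < v)) ⊆ V.filter (fun v => x < v) := by
      intro z hz
      rcases Finset.mem_insert.mp hz with rfl | hz
      · exact Finset.mem_filter.mpr ⟨hyV, hxy⟩
      · rcases Finset.mem_filter.mp hz with ⟨hzV, hyz⟩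
        exact Finset.mem_filter.mpr ⟨hzV, lt_trans hxy hyz⟩
    have hynot : y ∉ V.filter (fun v => y < v) := by
      simp
    have := Finset.card_le_card hsub
    rw [Finset.card_insert_of_notMem hynot] at this
    simp only [hgdef]
    omega
  set Φ : A → ℝ := fun a => ∑ η : N, f (u a η) with hΦdef
  obtain ⟨b, hbS, hbmax⟩ := S.exists_max_image Φ hSne
  refine ⟨b, ?_⟩
  intro a'
  set D : Set N := diffStates u b a' with hDdef
  rcases Set.eq_empty_or_nonempty D with hD | hD
  · simp [infOn, hD]
  by_cases ha'S : a' ∈ S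
  · -- a' is a safety-level action; use maximality of Φ at b
    by_contra hcon
    have hlt : infOn u b D < infOn u a' D := not_le.mp hcon
    -- get minimizer of u b on D
    set Dfin : Finset N := Finset.univ.filter (fun η => η ∈ D) with hDfdef
    have hDfmem : ∀ η, η ∈ Dfin ↔ η ∈ D := by
      intro η; simp [hDfdef]
    have hDfne : Dfin.Nonempty := by
      obtain ⟨η, hη⟩ := hD
      exact ⟨η, (hDfmem η).mpr hη⟩
    obtain ⟨η₀, hη₀Df, hη₀min⟩ := Dfin.exists_min_image (fun η => u b η) hDfne
    have hη₀D : η₀ ∈ D := (hDfmem η₀).mp hη₀Df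
    set m : ℝ := u b η₀ with hmdef
    have hm_le_inf : (m : EReal) ≤ infOn u b D := by
      apply le_iInf₂
      intro η hη
      exact_mod_cast EReal.coe_le_coe_iff.mpr (hη₀min η ((hDfmem η).mpr hη))
    have hkey : ∀ η ∈ D, m < u a' η := by
      intro η hη
      have h1 : (m : EReal) < (u a' η : EReal) :=
        lt_of_le_of_lt hm_le_inf (lt_of_lt_of_le hlt (iInf₂_le η hη))
      exact_mod_cast h1
    -- value of f at m
    have hgm_pos : 1 ≤ g m := by
      have hmem : u a' η₀ ∈ V.filter (fun v => m < v) :=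
        Finset.mem_filter.mpr ⟨hmemV a' ha'S η₀, hkey η₀ hη₀D⟩
      have : 0 < (V.filter (fun v => m < v)).card := Finset.card_pos.mpr ⟨_, hmem⟩
      simp only [hgdef]
      omega
    obtain ⟨G, hG⟩ : ∃ G, g m = G + 1 := ⟨g m - 1, (Nat.succ_pred_eq_of_pos hgm_pos).symm⟩
    set Q : ℝ := B ^ G with hQdef
    have hQ1 : (1:ℝ) ≤ Q := one_le_pow₀ hB1
    have hfa' : ∀ η ∈ D, -Q ≤ f (u a' η) := by
      intro η hη
      have h1 : g (u a' η) + 1 ≤ g m := hg_lt m (u a' η) (hkey η hη) (hmemV a' ha'S η)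
      have h2 : g (u a' η) ≤ G := by omega
      have h3 : B ^ g (u a' η) ≤ Q := by
        rw [hQdef]; exact pow_le_pow_right₀ hB1 h2
      simp only [hfdef]; linarith
    have hfm : f m = -(Q * B) := by
      simp only [hfdef]
      rw [hG, pow_succ, hQdef]
    -- sum manipulation
    have hsum : Φ a' - Φ b = ∑ η ∈ Dfin, (f (u a' η) - f (u b η)) := by
      rw [hΦdef]
      simp only
      rw [← Finset.sum_sub_distrib, hDfdef]
      refine (Finset.sum_filter_of_ne ?_).symm
      intro η _ hne0
      by_contra hηD
      have heq : u b η = u a' η := by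
        by_contra hne'
        exact hηD hne'
      rw [heq] at hne0
      exact hne0 (sub_self _)
    have hsplit : ∑ η ∈ Dfin, (f (u a' η) - f (u b η))
        = (f (u a' η₀) - f m) + ∑ η ∈ Dfin.erase η₀, (f (u a' η) - f (u b η)) := by
      rw [← Finset.add_sum_erase Dfin (fun η => f (u a' η) - f (u b η)) hη₀Df, hmdef]
    have hterm0 : Q * (n:ℝ) ≤ f (u a' η₀) - f m := by
      have h1 : -Q ≤ f (u a' η₀) := hfa' η₀ hη₀D
      rw [hfm, hBdef]
      have h3 : Q * ((n:ℝ) + 1) = Q * (n:ℝ) + Q := by ring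
      linarith
    have hterm : ∀ η ∈ Dfin.erase η₀, (1 - Q) ≤ f (u a' η) - f (u b η) := by
      intro η hη
      have hηD : η ∈ D := (hDfmem η).mp (Finset.mem_of_mem_erase hη)
      have h1 : -Q ≤ f (u a' η) := hfa' η hηD
      have h2 : f (u b η) ≤ -1 := hf_neg _
      linarith
    have hsum2 : ((Dfin.erase η₀).card : ℝ) * (1 - Q)
        ≤ ∑ η ∈ Dfin.erase η₀, (f (u a' η) - f (u b η)) := by
      have h := Finset.card_nsmul_le_sum (Dfin.erase η₀) _ _ hterm
      simpa [nsmul_eq_mul] using h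
    have hkn : (Dfin.erase η₀).card + 1 ≤ n := by
      have h1 : (Dfin.erase η₀).card + 1 = Dfin.card := Finset.card_erase_add_one hη₀Df
      have h2 : Dfin.card ≤ n := by rw [hn]; exact Finset.card_le_univ Dfin
      omega
    have hkR : ((Dfin.erase η₀).card : ℝ) ≤ (n:ℝ) - 1 := by
      have h : ((Dfin.erase η₀).card : ℝ) + 1 ≤ (n:ℝ) := by exact_mod_cast hkn
      linarith
    have hflip : ((n:ℝ) - 1) * (1 - Q) ≤ ((Dfin.erase η₀).card : ℝ) * (1 - Q) :=
      mul_le_mul_of_nonpos_right hkR (by linarith)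
    have hfinal : 0 < Φ a' - Φ b := by
      rw [hsum, hsplit]
      have e : Q * (n:ℝ) + ((n:ℝ) - 1) * (1 - Q) = Q + (n:ℝ) - 1 := by ring
      have hn1R : (1:ℝ) ≤ (n:ℝ) := by exact_mod_cast hn1
      linarith
    have hmax : Φ a' ≤ Φ b := hbmax a' ha'S
    linarith
  · -- a' is not a safety-level action
    have : ¬ ∀ η : N, safetyLevel u ≤ (u a' η : EReal) := fun h => ha'S ((hSmem a').mpr h)
    push_neg at this
    obtain ⟨η₀, hη₀⟩ := this
    have hb0 : safetyLevel u ≤ (u b η₀ : EReal) := (hSmem b).mp hbS η₀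
    have hlt : (u a' η₀ : EReal) < (u b η₀ : EReal) := lt_of_lt_of_le hη₀ hb0
    have hη₀D : η₀ ∈ D := by
      have : u a' η₀ < u b η₀ := by exact_mod_cast hlt
      exact ne_of_gt this
    calc infOn u a' D ≤ (u a' η₀ : EReal) := iInf₂_le η₀ hη₀D
      _ ≤ safetyLevel u := le_of_lt hη₀
      _ ≤ infOn u b D := le_iInf₂ fun η _ => (hSmem b).mp hbS η
end

section
/- In the discrete first-price auction with grid size ε > 0 and value v ≥ 0, the bid b*(v) — where b*(v) = ε⌊v/ε⌋ if ε⌊v/ε⌋ ≠ v or v = 0, and b*(v) = v − ε if ε⌊v/ε⌋ = v ≠ 0 — is multi-leximin and is the unique multi-leximin bid. -/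
/-!
The sorted utility vector of a bid `b` consists of one `0` per lost state followed by one
`v - b` per won state (`none` is always won). Raising the bid strictly shrinks the set of lost
states, since the bidder then also beats the competing bid equal to the old one. The bid `b*` is
the greatest bid strictly below `v`, so every other bid `b` is either below `b*`, and then has
more leading zeros, or equal to `v`, and then has only zeros; either way its vector is
lexicographically below that of `b*`, whose entry after the leading zeros is `v - b* > 0`.
-/

open Finset List

theorem List.lex_replicate_append {α : Type*} {r : α → α → Prop} {a c : α} (h : r a c)
    (n : ℕ) (s t : List α) :
    List.Lex r (replicate n a ++ a :: s) (replicate n a ++ c :: t) :=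
  .append_left r (.rel h) _

theorem List.lex_replicate_append_replicate {α : Type*} {r : α → α → Prop} {a x c : α}
    (hac : r a c) {L W L' W' : ℕ} (hW' : 0 < W') (hsum : L + W = L' + W')
    (h : L' < L ∨ x = a) :
    List.Lex r (replicate L a ++ replicate W x) (replicate L' a ++ replicate W' c) := by
  obtain ⟨k, rfl⟩ := Nat.exists_eq_add_of_lt hW'
  obtain ⟨s, hs⟩ : ∃ s, replicate L a ++ replicate W x = replicate L' a ++ a :: s := by
    rcases h with hL | hx
    · obtain ⟨j, rfl⟩ := Nat.exists_eq_add_of_lt hL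
      exact ⟨replicate j a ++ replicate W x, by
        rw [add_assoc, replicate_add, append_assoc, replicate_succ, cons_append]⟩
    · exact ⟨replicate k a, by
        rw [hx, replicate_append_replicate, hsum, replicate_add, zero_add, replicate_succ]⟩
  rw [hs, zero_add, replicate_succ]
  exact List.lex_replicate_append hac _ _ _

theorem sVec_eq_replicate_append_replicate {A N : Type*} [Fintype N] (u : A → N → ℝ) (a : A)
    (p : N → Prop) [DecidablePred p] {c : ℝ} (hc : 0 ≤ c)
    (hu : ∀ η, u a η = if p η then c else 0) :
    sVec u a = replicate #{η | ¬ p η} 0 ++ replicate #{η | p η} c := by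
  have hsorted : (replicate #{η | ¬ p η} (0 : ℝ) ++ replicate #{η | p η} c).Pairwise (· ≤ ·) :=
    pairwise_append.2 ⟨pairwise_replicate.2 (.inr le_rfl), pairwise_replicate.2 (.inr le_rfl),
      fun x hx y hy => by rw [eq_of_mem_replicate hx, eq_of_mem_replicate hy]; exact hc⟩
  refine (Perm.eq_of_pairwise' (Multiset.pairwise_sort _ _) hsorted (Multiset.coe_eq_coe.1 ?_))
  rw [sVec, Multiset.sort_eq, ← Multiset.coe_add, Multiset.coe_replicate, Multiset.coe_replicate,
    add_comm, ← Multiset.filter_add_not p univ.val, Multiset.map_add]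
  congr 1
  · rw [Multiset.map_congr rfl fun η hη => by rw [hu, if_pos (Multiset.mem_filter.1 hη).2],
      Multiset.map_const']
    rfl
  · rw [Multiset.map_congr rfl fun η hη => by rw [hu, if_neg (Multiset.mem_filter.1 hη).2],
      Multiset.map_const']
    rfl

theorem multiLeximin_and_unique_of_forall_lex {A N : Type*} [Fintype N] {u : A → N → ℝ} {a : A}
    (h : ∀ b ≠ a, List.Lex (· < ·) (sVec u b) (sVec u a)) :
    MultiLeximin u a ∧ ∀ b, MultiLeximin u b → b = a := by
  refine ⟨fun b => (eq_or_ne b a).imp (congrArg _) (h b), fun b hb => by_contra fun hne => ?_⟩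
  rcases hb a with heq | hlt
  · exact irrefl _ (heq ▸ h b hne)
  · exact asymm hlt (h b hne)

section Auction

open Classical

variable {ε v : ℝ}

theorem eq_zero_of_mem_bid_zero {x : ℝ} (hε : 0 ≤ ε) (hx : x ∈ Bid ε 0) : x = 0 := by
  obtain ⟨⟨k, rfl⟩, hk⟩ := hx
  exact hk.antisymm (mul_nonneg hε k.cast_nonneg)

theorem le_mul_floor_of_mem_bid (hε : 0 < ε) {x : ℝ} (hx : x ∈ Bid ε v) :
    x ≤ ε * ⌊v / ε⌋ := by
  obtain ⟨⟨k, rfl⟩, hk⟩ := hx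
  have hk' : (k : ℤ) ≤ ⌊v / ε⌋ := Int.le_floor.2 (by rw [le_div_iff₀ hε]; push_cast; linarith)
  exact mul_le_mul_of_nonneg_left (by exact_mod_cast hk') hε.le

theorem eq_of_mem_bid_of_sub_lt (hε : 0 < ε) (hfl : ε * ⌊v / ε⌋ = v) {x : ℝ}
    (hx : x ∈ Bid ε v) (hlt : v - ε < x) : x = v := by
  obtain ⟨⟨k, rfl⟩, hk⟩ := hx
  have hle : (k : ℝ) ≤ ⌊v / ε⌋ := le_of_mul_le_mul_left (hk.trans hfl.ge) hε
  have hgt : (⌊v / ε⌋ : ℝ) < k + 1 := lt_of_mul_lt_mul_left (by linarith) hε.le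
  have hk : (k : ℤ) = ⌊v / ε⌋ := by
    have : (k : ℤ) ≤ ⌊v / ε⌋ := by exact_mod_cast hle
    have : ⌊v / ε⌋ < (k : ℤ) + 1 := by exact_mod_cast hgt
    omega
  rw [← hfl, ← hk]
  rfl

theorem isGreatest_bid_lt (hε : 0 < ε) {x : ℝ} (hx : x ∈ Bid ε v)
    (h1 : ε * ⌊v / ε⌋ ≠ v → x = ε * ⌊v / ε⌋) (h2 : ε * ⌊v / ε⌋ = v → x = v - ε) :
    IsGreatest {b ∈ Bid ε v | b < v} x := by
  by_cases hfl : ε * ⌊v / ε⌋ = v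
  · refine ⟨⟨hx, by linarith [h2 hfl]⟩, fun b ⟨hb, hbv⟩ => le_of_not_gt fun hxb => ?_⟩
    exact hbv.ne (eq_of_mem_bid_of_sub_lt hε hfl hb (h2 hfl ▸ hxb))
  · refine ⟨⟨hx, ?_⟩, fun b ⟨hb, _⟩ => h1 hfl ▸ le_mul_floor_of_mem_bid hε hb⟩
    have hle : ε * ⌊v / ε⌋ ≤ v := by rw [mul_comm, ← le_div_iff₀ hε]; exact Int.floor_le _
    exact h1 hfl ▸ hle.lt_of_ne hfl

def Bid.Wins (b : Bid ε v) : Option (Bid ε v) → Prop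
  | none => True
  | some β => (β : ℝ) < b

theorem dfpaU_eq_ite (b : Bid ε v) (η : Option (Bid ε v)) :
    dfpaU ε v b η = if Bid.Wins b η then v - b else 0 := by
  cases η <;> simp [dfpaU, Bid.Wins]

section Counting

variable [Fintype (Bid ε v)]

theorem card_filter_wins_pos (b : Bid ε v) : 0 < #{η | Bid.Wins b η} :=
  card_pos.2 ⟨none, by simp [Bid.Wins]⟩

theorem card_filter_not_wins_lt {b b' : Bid ε v} (h : (b : ℝ) < b') :
    #{η | ¬ Bid.Wins b' η} < #{η | ¬ Bid.Wins b η} := by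
  have hsub :
      filter (fun η => ¬ Bid.Wins b' η) univ ⊆ filter (fun η => ¬ Bid.Wins b η) univ := by
    intro η
    simp only [Finset.mem_filter, mem_univ, true_and]
    cases η with
    | none => simp [Bid.Wins]
    | some β => exact fun hβ hb => hβ (hb.trans h)
  exact card_lt_card <| (ssubset_iff_of_subset hsub).2
    ⟨some b, by simp [Bid.Wins], by simpa [Bid.Wins] using h⟩

theorem sVec_dfpaU (b : Bid ε v) :
    sVec (dfpaU ε v) b =
      replicate #{η | ¬ Bid.Wins b η} 0 ++ replicate #{η | Bid.Wins b η} (v - b) :=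
  sVec_eq_replicate_append_replicate _ _ _ (sub_nonneg.2 b.2.2) (dfpaU_eq_ite b)

theorem lex_sVec_dfpaU {b b' : Bid ε v} (hb' : (b' : ℝ) < v) (h : (b : ℝ) < b' ∨ (b : ℝ) = v) :
    List.Lex (· < ·) (sVec (dfpaU ε v) b) (sVec (dfpaU ε v) b') := by
  rw [sVec_dfpaU, sVec_dfpaU]
  refine List.lex_replicate_append_replicate (sub_pos.2 hb') (card_filter_wins_pos b') ?_
    (h.imp card_filter_not_wins_lt (sub_eq_zero.2 ·.symm))
  rw [add_comm, card_filter_add_card_filter_not, add_comm, card_filter_add_card_filter_not]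

end Counting

end Auction

theorem dfpa_multiLeximin_unique_general (ε v : ℝ) (hε : 0 < ε)
    [Fintype ↥(Bid ε v)]
    (bstar : Bid ε v)
    (h1 : (ε * (⌊v / ε⌋ : ℝ) ≠ v ∨ v = 0) → (bstar : ℝ) = ε * (⌊v / ε⌋ : ℝ))
    (h2 : ε * (⌊v / ε⌋ : ℝ) = v ∧ v ≠ 0 → (bstar : ℝ) = v - ε) :
    MultiLeximin (dfpaU ε v) bstar ∧
      ∀ b : Bid ε v, MultiLeximin (dfpaU ε v) b → b = bstar := by
  refine multiLeximin_and_unique_of_forall_lex fun b hb => ?_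
  have hv0 : v ≠ 0 := by
    rintro rfl
    exact hb (Subtype.ext ((eq_zero_of_mem_bid_zero hε.le b.2).trans
      (eq_zero_of_mem_bid_zero hε.le bstar.2).symm))
  obtain ⟨⟨-, hlt⟩, hmax⟩ :=
    isGreatest_bid_lt hε bstar.2 (fun h => h1 (.inl h)) (fun h => h2 ⟨h, hv0⟩)
  refine lex_sVec_dfpaU hlt (b.2.2.lt_or_eq.imp (fun hbv => ?_) id)
  exact (hmax ⟨b.2, hbv⟩).lt_of_ne (Subtype.coe_injective.ne hb)

/-- in the discrete first-price auction with grid size `ε > 0` and value `v ≥ 0`,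
the bid `b*(v)` — where `b*(v) = ε⌊v/ε⌋` if `ε⌊v/ε⌋ ≠ v` or `v = 0`, and `b*(v) = v − ε`
if `ε⌊v/ε⌋ = v ≠ 0` — is multi-leximin and is the unique multi-leximin bid. -/
theorem dfpa_multiLeximin_unique (ε v : ℝ) (hε : 0 < ε) (hv : 0 ≤ v)
    [Fintype ↥(Bid ε v)]
    (bstar : Bid ε v)
    (h1 : (ε * (⌊v / ε⌋ : ℝ) ≠ v ∨ v = 0) → (bstar : ℝ) = ε * (⌊v / ε⌋ : ℝ))
    (h2 : ε * (⌊v / ε⌋ : ℝ) = v ∧ v ≠ 0 → (bstar : ℝ) = v - ε) :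
    MultiLeximin (dfpaU ε v) bstar ∧
      ∀ b : Bid ε v, MultiLeximin (dfpaU ε v) b → b = bstar :=
  dfpa_multiLeximin_unique_general ε v hε bstar h1 h2
end

section
/- In the discrete VCG combinatorial auction with false-name bids, if every one of the n agents submits an exact-bidding Sybil attack for her valuation, then the allocation selected by VCG achieves optimal real welfare: its real welfare equals the maximum over partitions (S_1,…,S_n) of M of the sum over i of v_i(S_i). -/
/-- A combinatorial bid over the item set `M` on the grid `{δ·k : k ∈ ℕ}`: a function from
bundles (subsets of `M`) to grid values, assigning `0` to the empty bundle. -/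
structure CombBid (M : Type*) [Fintype M] [DecidableEq M] (δ : ℝ) where
  val : Finset M → ℝ
  grid : ∀ S : Finset M, ∃ k : ℕ, val S = δ * k
  val_empty : val ∅ = 0

/-- An allocation of the item set `S` among the list of submitted bids `bs`: each bid gets a
(possibly empty) bundle, the bundles being pairwise disjoint with union `S`. -/
structure Alloc {M : Type*} [Fintype M] [DecidableEq M] {δ : ℝ}
    (bs : List (CombBid M δ)) (S : Finset M) where
  bundle : Fin bs.length → Finset M
  disj : ∀ i j, i ≠ j → Disjoint (bundle i) (bundle j)
  cover : Finset.univ.biUnion bundle = S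

/-- The observed welfare of an allocation: each submitted bid's value of its own bundle,
summed over the submitted bids. -/
noncomputable def obsW {M : Type*} [Fintype M] [DecidableEq M] {δ : ℝ}
    {bs : List (CombBid M δ)} {S : Finset M} (α : Alloc bs S) : ℝ :=
  ∑ i : Fin bs.length, (bs.get i).val (α.bundle i)

/-- The maximal observed welfare of an allocation of `S` among the submitted bids `bs`. -/
noncomputable def maxObsW {M : Type*} [Fintype M] [DecidableEq M] {δ : ℝ}
    (bs : List (CombBid M δ)) (S : Finset M) : ℝ :=
  sSup (Set.range fun α : Alloc bs S => obsW α)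

/-- An action of an agent: a nonempty finite tuple (list) of combinatorial bids
(a Sybil attack). -/
abbrev Act (M : Type*) [Fintype M] [DecidableEq M] (δ : ℝ) :=
  {l : List (CombBid M δ) // l ≠ []}

/-- The VCG payment of the `i`-th submitted bid, for a selection rule `select` choosing a
(welfare-maximizing) allocation of all items: the observed welfare of the selected allocation
minus the maximal observed welfare of an allocation of the remaining items `M ∖ αᵢ`. -/
noncomputable def payment {M : Type*} [Fintype M] [DecidableEq M] {δ : ℝ}
    (select : ∀ bs : List (CombBid M δ), bs ≠ [] → Alloc bs Finset.univ)
    (bs : List (CombBid M δ)) (hbs : bs ≠ []) (i : Fin bs.length) : ℝ :=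
  obsW (select bs hbs) - maxObsW bs (Finset.univ \ (select bs hbs).bundle i)

/-- The utility of an agent with valuation `v` submitting the Sybil attack `mine` against the
opposing bids `others`: her value of the union of the bundles allocated to her own bids, minus
the sum of the VCG payments of her own bids. -/
noncomputable def utility {M : Type*} [Fintype M] [DecidableEq M] {δ : ℝ}
    (select : ∀ bs : List (CombBid M δ), bs ≠ [] → Alloc bs Finset.univ)
    (v : Finset M → ℝ) (mine : Act M δ) (others : List (CombBid M δ)) : ℝ :=
  let bs := mine.val ++ others
  let hbs : bs ≠ [] := fun h => mine.prop (List.append_eq_nil_iff.mp h).1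
  let α := select bs hbs
  let mineIdx : Finset (Fin bs.length) :=
    Finset.univ.filter fun i => (i : ℕ) < mine.val.length
  v (mineIdx.biUnion α.bundle) - ∑ i ∈ mineIdx, payment select bs hbs i

/-- The bid grid size: `ε / (2·m!)`. -/
noncomputable def bidGrid (ε : ℝ) (m : ℕ) : ℝ := ε / (2 * (m.factorial : ℝ))


/-- The combined list of all submitted bids: agent `0`'s bids, then agent `1`'s, etc. -/
def allBids {M : Type*} [Fintype M] [DecidableEq M] {δ : ℝ} {n : ℕ}
    (attack : Fin n → Act M δ) : List (CombBid M δ) :=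
  (List.ofFn fun i => (attack i).val).flatten

/-- The position in the combined bid list at which agent `i`'s bids start. -/
def offset {M : Type*} [Fintype M] [DecidableEq M] {δ : ℝ} {n : ℕ}
    (attack : Fin n → Act M δ) (i : ℕ) : ℕ :=
  (((List.ofFn fun j => (attack j).val).take i).map List.length).sum

/-- The union of the bundles allocated to the bids of agent `i`. -/
noncomputable def agentBundle {M : Type*} [Fintype M] [DecidableEq M] {δ : ℝ} {n : ℕ}
    (attack : Fin n → Act M δ) (α : Alloc (allBids attack) Finset.univ) (i : Fin n) :
    Finset M :=
  (Finset.univ.filter fun j : Fin (allBids attack).length =>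
      offset attack i ≤ (j : ℕ) ∧ (j : ℕ) < offset attack ((i : ℕ) + 1)).biUnion α.bundle

/-- The real welfare of an allocation: each agent's true value of the union of the bundles
allocated to her own bids, summed over the agents. -/
noncomputable def realWelfare {M : Type*} [Fintype M] [DecidableEq M] {δ ε : ℝ} {n : ℕ}
    (v : Fin n → CombBid M ε) (attack : Fin n → Act M δ)
    (α : Alloc (allBids attack) Finset.univ) : ℝ :=
  ∑ i : Fin n, (v i).val (agentBundle attack α i)

/-- The optimal welfare: the maximum over partitions `(S_1, …, S_n)` of `M` of
`∑ i, v_i(S_i)`. -/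
noncomputable def optWelfare {M : Type*} [Fintype M] [DecidableEq M] {ε : ℝ} {n : ℕ}
    (v : Fin n → CombBid M ε) : ℝ :=
  sSup {w : ℝ | ∃ P : Fin n → Finset M, (∀ i j, i ≠ j → Disjoint (P i) (P j)) ∧
      Finset.univ.biUnion P = Finset.univ ∧ w = ∑ i : Fin n, (v i).val (P i)}

/-- A Sybil attack `b` of an agent with valuation `v` is exact-bidding if for every bundle
`S`, the maximal total bid value over allocations of `S` among the attack's bids equals
`v(S)`. -/
def ExactBidding {M : Type*} [Fintype M] [DecidableEq M] {δ : ℝ}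
    (v : Finset M → ℝ) (b : Act M δ) : Prop :=
  ∀ S : Finset M, (∀ α : Alloc b.val S, obsW α ≤ v S) ∧ ∃ α : Alloc b.val S, obsW α = v S


/-!
VCG selects an allocation `α` of maximal observed welfare. Exact bidding makes observed welfare
a lower bound for real welfare (agent `i`'s bids, restricted to her bundle, bid at most `vᵢ` of
it), and makes every value `∑ vᵢ(Sᵢ)` of a partition observable: splitting each `Sᵢ` optimally
among agent `i`'s own bids gives an allocation with that observed welfare. So
`∑ vᵢ(Sᵢ) ≤ obsW α ≤ realWelfare α`, while `realWelfare α` is itself the value of the partition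
into the agents' bundles.
-/

theorem List.getElem_flatten_sum_take_add {α : Type*} (L : List (List α)) {i k : ℕ}
    (hi : i < L.length) (hk : k < L[i].length)
    (h : ((L.take i).map List.length).sum + k < L.flatten.length) :
    L.flatten[((L.take i).map List.length).sum + k] = L[i][k] := by
  rw [List.getElem_of_eq (List.drop_take_succ_flatten_eq_getElem L i hi).symm hk]
  simp [List.map_take]

theorem Alloc.bundle_subset {M : Type*} [Fintype M] [DecidableEq M] {δ : ℝ}
    {bs : List (CombBid M δ)} {S : Finset M} (γ : Alloc bs S) (k : Fin bs.length) :
    γ.bundle k ⊆ S :=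
  (Finset.subset_biUnion_of_mem γ.bundle (Finset.mem_univ k)).trans γ.cover.subset

section BidIndex

variable {M : Type*} [Fintype M] [DecidableEq M] {δ : ℝ} {n : ℕ} (attack : Fin n → Act M δ)

theorem offset_eq_sum_take (i : ℕ) :
    offset attack i = ((List.ofFn fun j => (attack j).val.length).take i).sum := by
  simp [offset, List.map_take, List.map_ofFn, Function.comp_def]

theorem offset_monotone : Monotone (offset attack) := fun i i' h => by
  simpa only [offset_eq_sum_take] using List.monotone_sum_take _ h

theorem offset_succ (i : Fin n) :
    offset attack (i + 1) = offset attack i + (attack i).val.length := by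
  rw [offset_eq_sum_take, offset_eq_sum_take, List.sum_take_succ _ _ (by simp)]
  simp

theorem offset_le_length (i : ℕ) : offset attack i ≤ (allBids attack).length := by
  rw [offset_eq_sum_take, allBids, List.length_flatten, List.map_ofFn]
  exact (List.take_sublist _ _).sum_le_sum (by simp)

def bidIndex (p : Σ i : Fin n, Fin (attack i).val.length) : Fin (allBids attack).length :=
  ⟨offset attack p.1 + p.2, by
    have := offset_le_length attack (p.1 + 1)
    rw [offset_succ] at this
    omega⟩

theorem bidIndex_mem_Ico (p : Σ i : Fin n, Fin (attack i).val.length) :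
    (bidIndex attack p : ℕ) ∈ Set.Ico (offset attack p.1) (offset attack (p.1 + 1)) := by
  simp [bidIndex, offset_succ]

theorem eq_of_mem_Ico_offset {i i' : Fin n} {j : ℕ}
    (h : j ∈ Set.Ico (offset attack i) (offset attack (i + 1)))
    (h' : j ∈ Set.Ico (offset attack i') (offset attack (i' + 1))) : i = i' := by
  by_contra hne
  have hd := (offset_monotone attack).pairwise_disjoint_on_Ico_succ (Fin.val_injective.ne hne)
  simp only [Function.onFun, Order.succ_eq_add_one] at hd
  exact Set.disjoint_left.mp hd h h'

theorem bidIndex_injective : Function.Injective (bidIndex attack) := by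
  rintro ⟨i, k⟩ ⟨i', k'⟩ h
  obtain rfl : i = i' := eq_of_mem_Ico_offset attack (bidIndex_mem_Ico attack ⟨i, k⟩)
    (h ▸ bidIndex_mem_Ico attack ⟨i', k'⟩)
  obtain rfl : k = k' := Fin.ext (by simpa [bidIndex] using h)
  rfl

theorem bidIndex_bijective : Function.Bijective (bidIndex attack) := by
  -- surjectivity by counting: both sides have `∑ i, (attack i).val.length` elements
  refine (Fintype.bijective_iff_injective_and_card _).mpr ⟨bidIndex_injective attack, ?_⟩
  simp [allBids, List.sum_ofFn, Function.comp_def]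

noncomputable def bidEquiv :
    (Σ i : Fin n, Fin (attack i).val.length) ≃ Fin (allBids attack).length :=
  Equiv.ofBijective _ (bidIndex_bijective attack)

theorem bidEquiv_symm_bidIndex (p : Σ i : Fin n, Fin (attack i).val.length) :
    (bidEquiv attack).symm (bidIndex attack p) = p :=
  (bidEquiv attack).symm_apply_apply p

theorem get_bidIndex (p : Σ i : Fin n, Fin (attack i).val.length) :
    (allBids attack).get (bidIndex attack p) = (attack p.1).val.get p.2 := by
  simp only [List.get_eq_getElem, bidIndex, allBids, offset]
  rw [List.getElem_flatten_sum_take_add _ (by simp) (by simp)]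
  simp

end BidIndex

section Welfare

variable {M : Type*} [Fintype M] [DecidableEq M] {δ : ℝ} {n : ℕ} {attack : Fin n → Act M δ}

theorem obsW_eq_sum_agents {S : Finset M} (γ : Alloc (allBids attack) S) :
    obsW γ =
      ∑ i, ∑ k, ((attack i).val.get k).val (γ.bundle (bidIndex attack ⟨i, k⟩)) := by
  rw [obsW, ← (bidEquiv attack).sum_comp, Fintype.sum_sigma]
  simp only [bidEquiv, Equiv.ofBijective_apply, get_bidIndex]

theorem agentBundle_eq_biUnion (α : Alloc (allBids attack) Finset.univ) (i : Fin n) :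
    agentBundle attack α i =
      Finset.univ.biUnion fun k => α.bundle (bidIndex attack ⟨i, k⟩) := by
  have hidx : (Finset.univ.filter fun j : Fin (allBids attack).length =>
      offset attack i ≤ (j : ℕ) ∧ (j : ℕ) < offset attack ((i : ℕ) + 1)) =
      Finset.univ.image fun k => bidIndex attack ⟨i, k⟩ := by
    ext j
    obtain ⟨⟨i', k⟩, rfl⟩ := (bidIndex_bijective attack).2 j
    simp only [Finset.mem_filter, Finset.mem_univ, true_and, Finset.mem_image]
    constructor
    · intro h
      obtain rfl := eq_of_mem_Ico_offset attack h (bidIndex_mem_Ico attack ⟨i', k⟩)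
      exact ⟨k, rfl⟩
    · rintro ⟨k', hk'⟩
      rw [← hk']
      exact bidIndex_mem_Ico attack ⟨i, k'⟩
  rw [agentBundle, hidx, Finset.image_biUnion]

theorem agentBundle_disjoint (α : Alloc (allBids attack) Finset.univ) {i i' : Fin n}
    (h : i ≠ i') : Disjoint (agentBundle attack α i) (agentBundle attack α i') := by
  simp only [agentBundle_eq_biUnion, Finset.disjoint_biUnion_left, Finset.disjoint_biUnion_right]
  exact fun k _ k' _ =>
    α.disj _ _ ((bidIndex_injective attack).ne fun he => h (congrArg Sigma.fst he))

theorem biUnion_agentBundle (α : Alloc (allBids attack) Finset.univ) :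
    Finset.univ.biUnion (agentBundle attack α) = Finset.univ := by
  refine Finset.eq_univ_of_forall fun m => ?_
  obtain ⟨j, -, hm⟩ := Finset.mem_biUnion.mp (α.cover.symm ▸ Finset.mem_univ m)
  obtain ⟨⟨i, k⟩, rfl⟩ := (bidIndex_bijective attack).2 j
  simp only [Finset.mem_biUnion, agentBundle_eq_biUnion, Finset.mem_univ, true_and]
  exact ⟨i, k, hm⟩

def agentAlloc (α : Alloc (allBids attack) Finset.univ) (i : Fin n) :
    Alloc (attack i).val (agentBundle attack α i) where
  bundle k := α.bundle (bidIndex attack ⟨i, k⟩)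
  disj k k' h := α.disj _ _ ((bidIndex_injective attack).ne (by simpa using h))
  cover := (agentBundle_eq_biUnion α i).symm

theorem obsW_le_realWelfare {ε : ℝ} {v : Fin n → CombBid M ε}
    (hbid : ∀ i S (β : Alloc (attack i).val S), obsW β ≤ (v i).val S)
    (α : Alloc (allBids attack) Finset.univ) : obsW α ≤ realWelfare v attack α := by
  rw [obsW_eq_sum_agents]
  exact Finset.sum_le_sum fun i _ => hbid i _ (agentAlloc α i)

noncomputable def combineAlloc {P : Fin n → Finset M}
    (hPd : ∀ i j, i ≠ j → Disjoint (P i) (P j)) (hPc : Finset.univ.biUnion P = Finset.univ)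
    (β : ∀ i, Alloc (attack i).val (P i)) : Alloc (allBids attack) Finset.univ where
  bundle j := (β ((bidEquiv attack).symm j).1).bundle ((bidEquiv attack).symm j).2
  disj j j' h := by
    obtain ⟨⟨i, k⟩, rfl⟩ := (bidIndex_bijective attack).2 j
    obtain ⟨⟨i', k'⟩, rfl⟩ := (bidIndex_bijective attack).2 j'
    rw [bidEquiv_symm_bidIndex, bidEquiv_symm_bidIndex]
    by_cases hi : i = i'
    · subst hi
      exact (β i).disj k k' (by rintro rfl; exact h rfl)
    · exact (hPd i i' hi).mono ((β i).bundle_subset k) ((β i').bundle_subset k')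
  cover := by
    refine Finset.eq_univ_of_forall fun m => ?_
    obtain ⟨i, -, hm⟩ := Finset.mem_biUnion.mp (hPc.symm ▸ Finset.mem_univ m)
    obtain ⟨k, -, hk⟩ := Finset.mem_biUnion.mp ((β i).cover.symm ▸ hm)
    refine Finset.mem_biUnion.mpr ⟨bidIndex attack ⟨i, k⟩, Finset.mem_univ _, ?_⟩
    rwa [bidEquiv_symm_bidIndex]

theorem combineAlloc_bundle_bidIndex {P : Fin n → Finset M}
    (hPd : ∀ i j, i ≠ j → Disjoint (P i) (P j)) (hPc : Finset.univ.biUnion P = Finset.univ)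
    (β : ∀ i, Alloc (attack i).val (P i)) (p : Σ i : Fin n, Fin (attack i).val.length) :
    (combineAlloc hPd hPc β).bundle (bidIndex attack p) = (β p.1).bundle p.2 := by
  dsimp only [combineAlloc]
  rw [bidEquiv_symm_bidIndex]

theorem obsW_combineAlloc {P : Fin n → Finset M}
    (hPd : ∀ i j, i ≠ j → Disjoint (P i) (P j)) (hPc : Finset.univ.biUnion P = Finset.univ)
    (β : ∀ i, Alloc (attack i).val (P i)) :
    obsW (combineAlloc hPd hPc β) = ∑ i, obsW (β i) := by
  simp only [obsW_eq_sum_agents, combineAlloc_bundle_bidIndex]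
  rfl

theorem exists_alloc_obsW_eq_sum {ε : ℝ} {v : Fin n → CombBid M ε}
    (hbid : ∀ i S, ∃ β : Alloc (attack i).val S, obsW β = (v i).val S)
    {P : Fin n → Finset M} (hPd : ∀ i j, i ≠ j → Disjoint (P i) (P j))
    (hPc : Finset.univ.biUnion P = Finset.univ) :
    ∃ γ : Alloc (allBids attack) Finset.univ, obsW γ = ∑ i, (v i).val (P i) := by
  choose β hβ using fun i => hbid i (P i)
  exact ⟨combineAlloc hPd hPc β, by simp [obsW_combineAlloc, hβ]⟩

end Welfare

theorem exactBidding_optimal_welfare_general {M : Type*} [Fintype M] [DecidableEq M]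
    (ε : ℝ)
    (select : ∀ bs : List (CombBid M (bidGrid ε (Fintype.card M))), bs ≠ [] →
      Alloc bs Finset.univ)
    (hsel : ∀ (bs : List (CombBid M (bidGrid ε (Fintype.card M)))) (hbs : bs ≠ [])
      (α : Alloc bs Finset.univ), obsW α ≤ obsW (select bs hbs))
    (n : ℕ)
    (v : Fin n → CombBid M ε)
    (attack : Fin n → Act M (bidGrid ε (Fintype.card M)))
    (hex : ∀ i : Fin n, ExactBidding (v i).val (attack i))
    (hbs : allBids attack ≠ []) :
    realWelfare v attack (select (allBids attack) hbs) = optWelfare v := by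
  set α := select (allBids attack) hbs
  refine Eq.symm (IsGreatest.csSup_eq ⟨⟨agentBundle attack α, fun _ _ => agentBundle_disjoint α,
    biUnion_agentBundle α, rfl⟩, ?_⟩)
  rintro w ⟨P, hPd, hPc, rfl⟩
  obtain ⟨γ, hγ⟩ := exists_alloc_obsW_eq_sum (fun i S => (hex i S).2) hPd hPc
  calc ∑ i, (v i).val (P i) = obsW γ := hγ.symm
    _ ≤ obsW α := hsel _ hbs γ
    _ ≤ realWelfare v attack α := obsW_le_realWelfare (fun i S => (hex i S).1) α

/-- in the discrete VCG combinatorial auction with false-name bids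
(for any welfare-maximizing selection rule whose tie-breaking prefers allocations assigning
larger bundles to single bids), if every agent submits an exact-bidding Sybil attack for her
valuation, then the allocation selected by VCG achieves optimal real welfare. -/
theorem exactBidding_optimal_welfare {M : Type*} [Fintype M] [DecidableEq M]
    (ε : ℝ) (hε : 0 < ε) (hM : 1 ≤ Fintype.card M)
    (select : ∀ bs : List (CombBid M (bidGrid ε (Fintype.card M))), bs ≠ [] →
      Alloc bs Finset.univ)
    (hsel : ∀ (bs : List (CombBid M (bidGrid ε (Fintype.card M)))) (hbs : bs ≠ [])
      (α : Alloc bs Finset.univ), obsW α ≤ obsW (select bs hbs))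
    (htie : ∀ (bs : List (CombBid M (bidGrid ε (Fintype.card M)))) (hbs : bs ≠ [])
      (α : Alloc bs Finset.univ), obsW α = obsW (select bs hbs) →
      ∑ i, (α.bundle i).card ^ 2 ≤ ∑ i, ((select bs hbs).bundle i).card ^ 2)
    (n : ℕ) (hn : 0 < n)
    (v : Fin n → CombBid M ε)
    (attack : Fin n → Act M (bidGrid ε (Fintype.card M)))
    (hex : ∀ i : Fin n, ExactBidding (v i).val (attack i))
    (hbs : allBids attack ≠ []) :
    realWelfare v attack (select (allBids attack) hbs) = optWelfare v :=
  exactBidding_optimal_welfare_general ε select hsel n v attack hex hbs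
end

section
/- In the discrete first-price auction with grid size ε > 0 and value v ≥ 0, the bid ε⌊v/(2ε)⌋ (the largest grid point not exceeding v/2) is a min-max regret action. -/
/-- The max regret of an action `a`: `sup_{η ∈ N} (sup_{a' ∈ A} u(a',η) − u(a,η))`,
in the extended reals. -/
noncomputable def maxRegret {A N : Type*} (u : A → N → ℝ) (a : A) : EReal :=
  ⨆ η : N, ((⨆ a' : A, (u a' η : EReal)) - (u a η : EReal))

/-- A min-max regret action: its max regret is at most that of every action. -/
def MinMaxRegret {A N : Type*} (u : A → N → ℝ) (a : A) : Prop :=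
  ∀ a' : A, maxRegret u a ≤ maxRegret u a'

lemma bid_step {ε v : ℝ} (hε : 0 < ε) (a c : Bid ε v) (h : (a : ℝ) < (c : ℝ)) :
    (a : ℝ) + ε ≤ (c : ℝ) := by
  obtain ⟨⟨j, hj⟩, -⟩ := a.2
  obtain ⟨⟨k, hk⟩, -⟩ := c.2
  rw [hj, hk] at h ⊢
  have hjk : j < k := by
    by_contra hc
    push_neg at hc
    have : ε * (k : ℝ) ≤ ε * (j : ℝ) := by
      have : (k : ℝ) ≤ (j : ℝ) := by exact_mod_cast hc
      nlinarith
    linarith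
  have h1 : (j : ℝ) + 1 ≤ (k : ℝ) := by exact_mod_cast hjk
  nlinarith

lemma regret_ge {ε v : ℝ} (b' : Bid ε v) (η : Option (Bid ε v)) (a : Bid ε v) :
    ((dfpaU ε v a η - dfpaU ε v b' η : ℝ) : EReal) ≤ maxRegret (dfpaU ε v) b' := by
  refine le_trans ?_ (le_iSup (fun η => (⨆ a' : Bid ε v, (dfpaU ε v a' η : EReal))
      - (dfpaU ε v b' η : EReal)) η)
  rw [EReal.coe_sub]
  exact EReal.sub_le_sub (le_iSup (fun a' => (dfpaU ε v a' η : EReal)) a) le_rfl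

lemma regret_le {ε v : ℝ} (hε : 0 < ε) (hv : 0 ≤ v) (b : Bid ε v) :
    maxRegret (dfpaU ε v) b ≤ ((max (b : ℝ) (v - (b : ℝ) - ε) : ℝ) : EReal) := by
  set M : ℝ := max (b : ℝ) (v - (b : ℝ) - ε) with hM
  apply iSup_le
  intro η
  have key : ∀ a' : Bid ε v, dfpaU ε v a' η ≤ M + dfpaU ε v b η := by
    intro a'
    have ha0 := bid_nonneg hε a'
    have hb0 := bid_nonneg hε b
    have hav := a'.2.2
    have hbv := b.2.2
    have hMb : (b : ℝ) ≤ M := le_max_left _ _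
    have hM0 : 0 ≤ M := hb0.trans hMb
    cases η with
    | none => simp only [dfpaU]; linarith
    | some β =>
      have hβ0 := bid_nonneg hε β
      have hβv := β.2.2
      simp only [dfpaU]
      split_ifs with h1 h2 h2
      · linarith
      · push_neg at h2
        have hstep := bid_step hε β a' h1
        have hMr : v - (b : ℝ) - ε ≤ M := le_max_right _ _
        linarith
      · linarith
      · linarith
  calc (⨆ a' : Bid ε v, (dfpaU ε v a' η : EReal)) - (dfpaU ε v b η : ℝ)
      ≤ ((M + dfpaU ε v b η : ℝ) : EReal) - ((dfpaU ε v b η : ℝ) : EReal) :=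
        EReal.sub_le_sub (iSup_le fun a' => EReal.coe_le_coe_iff.mpr (key a')) le_rfl
    _ = (M : EReal) := by rw [← EReal.coe_sub]; norm_num

/-- in the discrete first-price auction with grid size `ε > 0` and value
`v ≥ 0`, the bid `ε⌊v/(2ε)⌋` (the largest grid point not exceeding `v/2`) is a min-max
regret action. -/
theorem dfpa_minMaxRegret (ε v : ℝ) (hε : 0 < ε) (hv : 0 ≤ v)
    (b : Bid ε v) (hb : (b : ℝ) = ε * (⌊v / (2 * ε)⌋ : ℝ)) :
    MinMaxRegret (dfpaU ε v) b := by
  intro b'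
  have hb0 := bid_nonneg hε b
  have hb'0 := bid_nonneg hε b'
  have hbv := b.2.2
  have hb'v := b'.2.2
  have h2ε : (0 : ℝ) < 2 * ε := by linarith
  have hfl1 : (b : ℝ) ≤ v / 2 := by
    rw [hb]
    have h := Int.floor_le (v / (2 * ε))
    have := mul_le_mul_of_nonneg_left h hε.le
    calc ε * (⌊v / (2 * ε)⌋ : ℝ) ≤ ε * (v / (2 * ε)) := this
      _ = v / 2 := by field_simp
  have hfl2 : v / 2 < (b : ℝ) + ε := by
    rw [hb]
    have h := Int.lt_floor_add_one (v / (2 * ε))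
    have := mul_lt_mul_of_pos_left h hε
    have heq : ε * (v / (2 * ε)) = v / 2 := by field_simp
    calc v / 2 = ε * (v / (2 * ε)) := heq.symm
      _ < ε * ((⌊v / (2 * ε)⌋ : ℝ) + 1) := this
      _ = ε * (⌊v / (2 * ε)⌋ : ℝ) + ε := by ring
  rcases lt_trichotomy (b' : ℝ) (b : ℝ) with hlt | heq' | hgt
  · -- b' < b : use state `some b'` with witness bid b' + ε
    have hstepb := bid_step hε b' b hlt
    have hstep : (b' : ℝ) + ε ≤ v := hstepb.trans hbv
    obtain ⟨⟨k, hk⟩, -⟩ := b'.2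
    have hmem : ((b' : ℝ) + ε) ∈ Bid ε v := by
      refine ⟨⟨k + 1, ?_⟩, hstep⟩
      push_cast
      rw [hk]; ring
    set a : Bid ε v := ⟨(b' : ℝ) + ε, hmem⟩ with ha
    refine le_trans (regret_le hε hv b) (le_trans ?_ (regret_ge b' (some b') a))
    apply EReal.coe_le_coe_iff.mpr
    have hu1 : dfpaU ε v a (some b') = v - ((b' : ℝ) + ε) := by
      simp only [dfpaU, ha]
      rw [if_pos (by simp; linarith)]
    have hu2 : dfpaU ε v b' (some b') = 0 := by
      simp [dfpaU]
    rw [hu1, hu2]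
    apply max_le <;> linarith
  · have : b' = b := Subtype.ext heq'
    rw [this]
  · -- b < b' : use state `none` with witness bid 0
    have hstepb := bid_step hε b b' hgt
    have hmem : (0 : ℝ) ∈ Bid ε v := ⟨⟨0, by simp⟩, hv⟩
    set a : Bid ε v := ⟨0, hmem⟩ with ha
    refine le_trans (regret_le hε hv b) (le_trans ?_ (regret_ge b' none a))
    apply EReal.coe_le_coe_iff.mpr
    have hu1 : dfpaU ε v a none = v := by simp [dfpaU, ha]
    have hu2 : dfpaU ε v b' none = v - (b' : ℝ) := rfl
    rw [hu1, hu2]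
    apply max_le <;> linarith
end

section
/- In the all-pay auction with value v ≥ 0, bidding 0 is loss-averse and is the unique loss-averse action. -/
/-- All-pay auction with value `v`, from a single agent's perspective: actions are bids
`b ∈ [0,v]`, nature states are competing bids `β ∈ [0,v]`, the agent wins iff `b > β`
(ties go to nature), and the utility is `v - b` upon winning and `-b` otherwise. -/
noncomputable def apaU (v : ℝ) (b β : Set.Icc (0 : ℝ) v) : ℝ :=
  if (β : ℝ) < (b : ℝ) then v - (b : ℝ) else -(b : ℝ)

/-- in the all-pay auction with value `v ≥ 0`, bidding `0` is loss-averse and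
is the unique loss-averse action. -/
theorem apa_lossAverse_zero (v : ℝ) (hv : 0 ≤ v) :
    LossAverse (apaU v) ⟨0, Set.mem_Icc.mpr ⟨le_rfl, hv⟩⟩ ∧
      ∀ b : Set.Icc (0 : ℝ) v, LossAverse (apaU v) b → (b : ℝ) = 0 := by
  set z : Set.Icc (0:ℝ) v := ⟨0, Set.mem_Icc.mpr ⟨le_rfl, hv⟩⟩ with hz
  have hu0 : ∀ η : Set.Icc (0:ℝ) v, apaU v z η = 0 := by
    intro η
    simp [apaU, hz, not_lt.mpr η.2.1]
  have hinf0 : ∀ s : Set (Set.Icc (0:ℝ) v), (0:EReal) ≤ infOn (apaU v) z s := by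
    intro s
    refine le_iInf₂ fun η _ => ?_
    rw [hu0 η]
    norm_num
  have hubb : ∀ b : Set.Icc (0:ℝ) v, apaU v b b = -(b:ℝ) := by
    intro b; simp [apaU]
  constructor
  · intro b
    rcases eq_or_lt_of_le b.2.1 with h0 | hbpos
    · have hD : diffStates (apaU v) z b = ∅ := by
        ext η
        simp [diffStates, apaU, hz, ← h0, not_lt.mpr η.2.1]
      rw [hD]
      simp [infOn]
    · have hmem : b ∈ diffStates (apaU v) z b := by
        show apaU v z b ≠ apaU v b b
        rw [hu0, hubb]
        intro h; linarith
      calc infOn (apaU v) b (diffStates (apaU v) z b)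
          ≤ (apaU v b b : EReal) := iInf₂_le b hmem
        _ ≤ 0 := by
            rw [hubb]
            exact_mod_cast neg_nonpos.mpr b.2.1
        _ ≤ infOn (apaU v) z (diffStates (apaU v) z b) := hinf0 _
  · intro b hb
    by_contra hne
    have hbpos : 0 < (b:ℝ) := lt_of_le_of_ne b.2.1 (Ne.symm hne)
    have hmem : b ∈ diffStates (apaU v) b z := by
      show apaU v b b ≠ apaU v z b
      rw [hu0, hubb]
      intro h; linarith
    have h1 := hb z
    have h2 : infOn (apaU v) b (diffStates (apaU v) b z) ≤ ((-(b:ℝ) : ℝ) : EReal) := by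
      calc infOn (apaU v) b (diffStates (apaU v) b z)
          ≤ (apaU v b b : EReal) := iInf₂_le b hmem
        _ = _ := by rw [hubb]
    have h3 := hinf0 (diffStates (apaU v) b z)
    have h4 : (0:EReal) ≤ ((-(b:ℝ) : ℝ) : EReal) := le_trans h3 (le_trans h1 h2)
    have : (0:ℝ) ≤ -(b:ℝ) := by exact_mod_cast h4
    linarith
end

section
/- In the facility-location game with n ≥ 1 agents on [0,1] using the mean, the unique loss-averse report of an agent with ideal point θ ∈ [0,1] is: nθ − (n−1)/2 if |θ − 1/2| ≤ 1/(2n); 0 if θ < 1/2 − 1/(2n); and 1 if θ > 1/2 + 1/(2n). Moreover this report is loss-averse. -/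
/-- Facility-location game with `n` agents on `[0,1]` using the mean, from a single agent's
perspective: the agent has ideal point `θ`, her action is a report `φ ∈ [0,1]`, a nature state
is the vector `ψ ∈ [0,1]^{n-1}` of the other agents' reports, the facility is located at the
mean of all reports, and the agent's utility is the negative of her distance to the facility. -/
noncomputable def flU (n : ℕ) (θ : ℝ) (φ : Set.Icc (0 : ℝ) 1)
    (ψ : Fin (n - 1) → Set.Icc (0 : ℝ) 1) : ℝ :=
  -|θ - ((φ : ℝ) + ∑ k, (ψ k : ℝ)) / n|

namespace FLaux

noncomputable def Fval (n : ℕ) (θ : ℝ) (c : Set.Icc (0:ℝ) 1) : ℝ :=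
  -(max |θ - (c:ℝ)/n| |θ - ((c:ℝ) + ((n:ℝ)-1))/n|)

variable {n : ℕ} {θ : ℝ}

lemma sum_bounds (hn : 1 ≤ n) (ψ : Fin (n-1) → Set.Icc (0:ℝ) 1) :
    0 ≤ ∑ k, ((ψ k : ℝ)) ∧ ∑ k, ((ψ k : ℝ)) ≤ (n:ℝ) - 1 := by
  constructor
  · exact Finset.sum_nonneg fun k _ => (ψ k).2.1
  · calc ∑ k, ((ψ k : ℝ)) ≤ ∑ _k : Fin (n-1), (1:ℝ) :=
        Finset.sum_le_sum fun k _ => (ψ k).2.2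
    _ = ((n-1 : ℕ) : ℝ) := by simp
    _ = (n:ℝ) - 1 := by
        rw [Nat.cast_sub hn]; norm_num

lemma Fval_le (hn : 1 ≤ n) (c : Set.Icc (0:ℝ) 1) (ψ : Fin (n-1) → Set.Icc (0:ℝ) 1) :
    Fval n θ c ≤ flU n θ c ψ := by
  have npos : (0:ℝ) < n := by exact_mod_cast hn
  obtain ⟨hS0, hS1⟩ := sum_bounds hn ψ
  set S := ∑ k, ((ψ k : ℝ))
  rw [Fval, flU, neg_le_neg_iff]
  have hlo : θ - ((c:ℝ) + ((n:ℝ)-1))/n ≤ θ - ((c:ℝ) + S)/n := by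
    have := (div_le_div_iff_of_pos_right npos).mpr (by linarith : (c:ℝ) + S ≤ (c:ℝ) + ((n:ℝ)-1))
    linarith
  have hhi : θ - ((c:ℝ) + S)/n ≤ θ - (c:ℝ)/n := by
    have := (div_le_div_iff_of_pos_right npos).mpr (by linarith : (c:ℝ) ≤ (c:ℝ) + S)
    linarith
  rcases abs_cases (θ - ((c:ℝ) + S)/n) with ⟨he, _⟩ | ⟨he, _⟩
  · rw [he]
    exact le_trans (le_trans hhi (le_abs_self _)) (le_max_left _ _)
  · rw [he]
    refine le_trans ?_ (le_max_right _ _)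
    have h2 := neg_le_abs (θ - ((c:ℝ) + ((n:ℝ)-1))/n)
    linarith

lemma mem_diff_iff (hn : 1 ≤ n) {a a' : Set.Icc (0:ℝ) 1} (hne : (a:ℝ) ≠ (a':ℝ))
    (ψ : Fin (n-1) → Set.Icc (0:ℝ) 1) :
    ψ ∈ diffStates (flU n θ) a a' ↔ ∑ k, ((ψ k : ℝ)) ≠ n*θ - ((a:ℝ)+(a':ℝ))/2 := by
  have npos : (0:ℝ) < n := by exact_mod_cast hn
  have hn0 : (n:ℝ) ≠ 0 := ne_of_gt npos
  set S := ∑ k, ((ψ k : ℝ))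
  have key : flU n θ a ψ = flU n θ a' ψ ↔ S = n*θ - ((a:ℝ)+(a':ℝ))/2 := by
    rw [flU, flU, neg_inj, abs_eq_abs]
    constructor
    · rintro (h | h)
      · exfalso
        apply hne
        field_simp at h
        linarith
      · field_simp at h
        linarith
    · intro h
      right
      field_simp
      linarith
  rw [diffStates]
  simp only [Set.mem_setOf_eq, ne_eq, not_iff_not]
  exact key


lemma sum_ite (m : ℕ) (i0 : Fin m) (x y : ℝ) :
    ∑ k : Fin m, (if k = i0 then x else y) = (m:ℝ)*y + (x - y) := by
  have h : ∀ k : Fin m, (if k = i0 then x else y) = y + (if k = i0 then x - y else 0) :=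
    fun k => by split <;> ring
  simp only [h, Finset.sum_add_distrib, Finset.sum_const, Finset.card_univ, Fintype.card_fin,
    nsmul_eq_mul, Finset.sum_ite_eq', Finset.mem_univ, if_true]

lemma exists_witness (hn : 1 ≤ n) {a a' : Set.Icc (0:ℝ) 1} (hne : (a:ℝ) ≠ (a':ℝ))
    (hD : (diffStates (flU n θ) a a').Nonempty) (c : Set.Icc (0:ℝ) 1)
    {ε : ℝ} (hε : 0 < ε) :
    ∃ ψ ∈ diffStates (flU n θ) a a', flU n θ c ψ < Fval n θ c + ε := by
  have npos : (0:ℝ) < n := by exact_mod_cast hn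
  have hn0 : (n:ℝ) ≠ 0 := ne_of_gt npos
  set S₀ : ℝ := n*θ - ((a:ℝ)+(a':ℝ))/2 with hS₀
  have hcast : ((n-1:ℕ):ℝ) = (n:ℝ) - 1 := by rw [Nat.cast_sub hn]; norm_num
  have key : S₀ = 0 ∨ S₀ = (n:ℝ)-1 → 2 ≤ n := by
    intro hts
    by_contra hlt
    have hn1 : n = 1 := by omega
    obtain ⟨ψ₁, hψ₁⟩ := hD
    rw [mem_diff_iff hn hne] at hψ₁
    apply hψ₁
    have hsum0 : ∑ k, ((ψ₁ k : ℝ)) = 0 := by subst hn1; simp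
    rw [hsum0, ← hS₀]
    subst hn1
    rcases hts with h | h
    · exact h.symm
    · rw [h]; norm_num
  set δ : ℝ := min 1 (ε*n/2) with hδ
  have hδ0 : 0 < δ := lt_min one_pos (by positivity)
  have hδ1 : δ ≤ 1 := min_le_left _ _
  have hδε : δ/n < ε := by
    have h1 : δ ≤ ε*n/2 := min_le_right _ _
    rw [div_lt_iff₀ npos]
    have h2 : 0 < ε * n := mul_pos hε npos
    linarith
  by_cases hA : |θ - ((c:ℝ) + ((n:ℝ)-1))/n| ≤ |θ - (c:ℝ)/n|
  · -- worst sum is 0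
    have hFv : Fval n θ c = -|θ - (c:ℝ)/n| := by rw [Fval, max_eq_left hA]
    by_cases h0 : (0:ℝ) = S₀
    · -- perturb: n ≥ 2
      have hn2 : 2 ≤ n := key (Or.inl h0.symm)
      have hm : 0 < n - 1 := by omega
      set i0 : Fin (n-1) := ⟨0, hm⟩
      set ψ : Fin (n-1) → Set.Icc (0:ℝ) 1 :=
        fun k => if k = i0 then ⟨δ, ⟨le_of_lt hδ0, hδ1⟩⟩ else ⟨0, by norm_num⟩ with hψ
      have hsum : ∑ k, ((ψ k : ℝ)) = δ := by
        have : ∀ k, ((ψ k : ℝ)) = if k = i0 then δ else 0 := by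
          intro k; by_cases h : k = i0 <;> simp [hψ, h]
        simp only [this, sum_ite (n-1) i0 δ 0]
        ring
      refine ⟨ψ, ?_, ?_⟩
      · rw [mem_diff_iff hn hne, hsum, ← hS₀, ← h0]; exact ne_of_gt hδ0
      · rw [flU, hsum, hFv]
        have habs : |θ - (c:ℝ)/n| - |δ/n| ≤ |(θ - (c:ℝ)/n) - δ/n| := abs_sub_abs_le_abs_sub _ _
        have heq : θ - ((c:ℝ) + δ)/n = (θ - (c:ℝ)/n) - δ/n := by ring
        have habs2 : |δ/n| = δ/n := abs_of_pos (by positivity)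
        rw [heq]
        linarith
    · -- all-zero works
      refine ⟨fun _ => ⟨0, by norm_num⟩, ?_, ?_⟩
      · rw [mem_diff_iff hn hne]
        simpa using h0
      · rw [flU, hFv]
        have : ∑ _k : Fin (n-1), ((0:ℝ)) = 0 := by simp
        simp only [Set.Icc.coe_zero]
        rw [Finset.sum_const]
        simp only [smul_zero]
        have h : θ - ((c:ℝ) + 0)/n = θ - (c:ℝ)/n := by ring
        rw [h]
        linarith
  · -- worst sum is n-1
    push_neg at hA
    have hFv : Fval n θ c = -|θ - ((c:ℝ) + ((n:ℝ)-1))/n| := by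
      rw [Fval, max_eq_right (le_of_lt hA)]
    by_cases h0 : (n:ℝ) - 1 = S₀
    · have hn2 : 2 ≤ n := key (Or.inr h0.symm)
      have hm : 0 < n - 1 := by omega
      set i0 : Fin (n-1) := ⟨0, hm⟩
      set ψ : Fin (n-1) → Set.Icc (0:ℝ) 1 :=
        fun k => if k = i0 then ⟨1-δ, ⟨by linarith, by linarith⟩⟩ else ⟨1, by norm_num⟩ with hψ
      have hsum : ∑ k, ((ψ k : ℝ)) = ((n:ℝ)-1) - δ := by
        have : ∀ k, ((ψ k : ℝ)) = if k = i0 then 1-δ else 1 := by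
          intro k; by_cases h : k = i0 <;> simp [hψ, h]
        simp only [this, sum_ite (n-1) i0 (1-δ) 1, hcast]
        ring
      refine ⟨ψ, ?_, ?_⟩
      · rw [mem_diff_iff hn hne, hsum, ← hS₀, ← h0]
        intro h; linarith [hδ0]
      · rw [flU, hsum, hFv]
        have habs : |θ - ((c:ℝ) + ((n:ℝ)-1))/n| - |δ/n| ≤
            |(θ - ((c:ℝ) + ((n:ℝ)-1))/n) + δ/n| := by
          have := abs_sub_abs_le_abs_sub (θ - ((c:ℝ) + ((n:ℝ)-1))/n) (-(δ/n))
          simpa [sub_neg_eq_add] using this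
        have heq : θ - ((c:ℝ) + (((n:ℝ)-1) - δ))/n = (θ - ((c:ℝ) + ((n:ℝ)-1))/n) + δ/n := by
          field_simp
          ring
        have habs2 : |δ/n| = δ/n := abs_of_pos (by positivity)
        rw [heq]
        linarith
    · refine ⟨fun _ => ⟨1, by norm_num⟩, ?_, ?_⟩
      · rw [mem_diff_iff hn hne]
        have : ∑ _k : Fin (n-1), ((⟨1, by norm_num⟩ : Set.Icc (0:ℝ) 1) : ℝ) = (n:ℝ)-1 := by
          rw [Finset.sum_const]
          simp [hcast]
        rw [this]
        exact h0
      · rw [flU, hFv]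
        have hs : ∑ _k : Fin (n-1), ((⟨1, by norm_num⟩ : Set.Icc (0:ℝ) 1) : ℝ) = (n:ℝ)-1 := by
          rw [Finset.sum_const]
          simp [hcast]
        rw [hs]
        linarith

lemma infOn_eq (hn : 1 ≤ n) {a a' : Set.Icc (0:ℝ) 1} (hne : (a:ℝ) ≠ (a':ℝ))
    (hD : (diffStates (flU n θ) a a').Nonempty) (c : Set.Icc (0:ℝ) 1) :
    infOn (flU n θ) c (diffStates (flU n θ) a a') = ((Fval n θ c : ℝ) : EReal) := by
  apply le_antisymm
  · apply le_of_forall_gt_imp_ge_of_dense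
    intro z hz
    obtain ⟨w, hw1, hw2⟩ := EReal.lt_iff_exists_real_btwn.mp hz
    have hε : 0 < w - Fval n θ c := by
      have := EReal.coe_lt_coe_iff.mp hw1
      linarith
    obtain ⟨ψ, hψD, hψlt⟩ := exists_witness hn hne hD c hε
    calc infOn (flU n θ) c (diffStates (flU n θ) a a')
        ≤ ((flU n θ c ψ : ℝ) : EReal) := iInf₂_le ψ hψD
      _ ≤ ((w : ℝ) : EReal) := by
          apply EReal.coe_le_coe_iff.mpr
          linarith
      _ ≤ z := le_of_lt hw2
  · apply le_iInf
    intro ψ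
    apply le_iInf
    intro _
    exact EReal.coe_le_coe_iff.mpr (Fval_le hn c ψ)

lemma Fval_eq_of_empty (hn : 1 ≤ n) {a a' : Set.Icc (0:ℝ) 1}
    (h : diffStates (flU n θ) a a' = ∅) : Fval n θ a = Fval n θ a' := by
  have hcast : ((n-1:ℕ):ℝ) = (n:ℝ) - 1 := by rw [Nat.cast_sub hn]; norm_num
  have hall : ∀ ψ, flU n θ a ψ = flU n θ a' ψ := by
    intro ψ
    by_contra hne
    exact (Set.eq_empty_iff_forall_notMem.mp h ψ) hne
  have h0 := hall (fun _ => ⟨0, by norm_num⟩)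
  have h1 := hall (fun _ => ⟨1, by norm_num⟩)
  have hs0 : ∑ _k : Fin (n-1), ((⟨0, by norm_num⟩ : Set.Icc (0:ℝ) 1) : ℝ) = 0 := by simp
  have hs1 : ∑ _k : Fin (n-1), ((⟨1, by norm_num⟩ : Set.Icc (0:ℝ) 1) : ℝ) = (n:ℝ)-1 := by
    rw [Finset.sum_const]; simp [hcast]
  rw [flU, flU, hs0] at h0
  rw [flU, flU, hs1] at h1
  rw [Fval, Fval]
  have e0 : |θ - (a:ℝ)/n| = |θ - (a':ℝ)/n| := by
    have ea : θ - ((a:ℝ) + 0)/n = θ - (a:ℝ)/n := by ring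
    have ea' : θ - ((a':ℝ) + 0)/n = θ - (a':ℝ)/n := by ring
    rw [ea, ea'] at h0
    linarith [h0]
  rw [e0, neg_inj]
  congr 1
  linarith [h1]

lemma lossAverse_iff (hn : 1 ≤ n) (a : Set.Icc (0:ℝ) 1) :
    LossAverse (flU n θ) a ↔ ∀ c : Set.Icc (0:ℝ) 1, Fval n θ c ≤ Fval n θ a := by
  constructor
  · intro hLA c
    rcases Set.eq_empty_or_nonempty (diffStates (flU n θ) a c) with hD | hD
    · exact le_of_eq (Fval_eq_of_empty hn hD).symm
    · have hne : (a:ℝ) ≠ (c:ℝ) := by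
        intro h
        obtain ⟨ψ, hψ⟩ := hD
        apply hψ
        have : a = c := Subtype.ext h
        rw [this]
      have h1 := hLA c
      rw [infOn_eq hn hne hD c, infOn_eq hn hne hD a] at h1
      exact EReal.coe_le_coe_iff.mp h1
  · intro hF a'
    rcases Set.eq_empty_or_nonempty (diffStates (flU n θ) a a') with hD | hD
    · rw [hD]
      simp [infOn]
    · have hne : (a:ℝ) ≠ (a':ℝ) := by
        intro h
        obtain ⟨ψ, hψ⟩ := hD
        apply hψ
        have : a = a' := Subtype.ext h
        rw [this]
      rw [infOn_eq hn hne hD a', infOn_eq hn hne hD a]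
      exact EReal.coe_le_coe_iff.mpr (hF a')

lemma max_abs_eq (t d : ℝ) (hd : 0 ≤ d) : max |t| |t - d| = d/2 + |t - d/2| := by
  rcases le_total t (d/2) with h | h
  · rw [max_eq_right, abs_of_nonpos (by linarith : t - d/2 ≤ 0)]
    · rw [abs_of_nonpos (by linarith : t - d ≤ 0)]; ring
    · rcases abs_cases t with ⟨e,he⟩|⟨e,he⟩ <;> rcases abs_cases (t-d) with ⟨f,hf⟩|⟨f,hf⟩ <;>
        rw [e,f] <;> linarith
  · rw [max_eq_left, abs_of_nonneg (by linarith : 0 ≤ t - d/2)]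
    · rw [abs_of_nonneg (by linarith : 0 ≤ t)]; ring
    · rcases abs_cases t with ⟨e,he⟩|⟨e,he⟩ <;> rcases abs_cases (t-d) with ⟨f,hf⟩|⟨f,hf⟩ <;>
        rw [e,f] <;> linarith

lemma Fval_le_iff (hn : 1 ≤ n) (a c : Set.Icc (0:ℝ) 1) :
    Fval n θ c ≤ Fval n θ a ↔
      |n*θ - ((n:ℝ)-1)/2 - (a:ℝ)| ≤ |n*θ - ((n:ℝ)-1)/2 - (c:ℝ)| := by
  have npos : (0:ℝ) < n := by exact_mod_cast hn
  have hn0 : (n:ℝ) ≠ 0 := ne_of_gt npos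
  have hmax : ∀ x : Set.Icc (0:ℝ) 1,
      Fval n θ x = -((((n:ℝ)-1)/n)/2 + |θ - (x:ℝ)/n - (((n:ℝ)-1)/n)/2|) := by
    intro x
    rw [Fval]
    congr 1
    have hd0 : 0 ≤ ((n:ℝ)-1)/n := by
      apply div_nonneg _ (le_of_lt npos)
      have : (1:ℝ) ≤ n := by exact_mod_cast hn
      linarith
    have h2 : θ - ((x:ℝ) + ((n:ℝ)-1))/n = (θ - (x:ℝ)/n) - ((n:ℝ)-1)/n := by
      field_simp
      ring
    rw [h2]
    exact max_abs_eq (θ - (x:ℝ)/n) (((n:ℝ)-1)/n) hd0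
  rw [hmax a, hmax c]
  have habs : ∀ x : Set.Icc (0:ℝ) 1,
      |n*θ - ((n:ℝ)-1)/2 - (x:ℝ)| = n * |θ - (x:ℝ)/n - (((n:ℝ)-1)/n)/2| := by
    intro x
    have h : n*θ - ((n:ℝ)-1)/2 - (x:ℝ) = n * (θ - (x:ℝ)/n - (((n:ℝ)-1)/n)/2) := by
      field_simp; ring
    rw [h, abs_mul, abs_of_pos npos]
  rw [habs a, habs c]
  constructor
  · intro h
    apply mul_le_mul_of_nonneg_left _ (le_of_lt npos)
    linarith
  · intro h
    have := le_of_mul_le_mul_left (by linarith : (n:ℝ) * |θ - (a:ℝ)/n - (((n:ℝ)-1)/n)/2| ≤ n * |θ - (c:ℝ)/n - (((n:ℝ)-1)/n)/2|) npos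
    linarith

end FLaux

/-- in the facility-location game with `n ≥ 1` agents on `[0,1]` using the
mean, the report `r(θ)` — equal to `nθ − (n−1)/2` if `|θ − 1/2| ≤ 1/(2n)`, to `0` if
`θ < 1/2 − 1/(2n)`, and to `1` if `θ > 1/2 + 1/(2n)` — is loss-averse and is the unique
loss-averse report of an agent with ideal point `θ ∈ [0,1]`. -/
theorem facility_lossAverse_unique (n : ℕ) (hn : 1 ≤ n)
    (θ : ℝ) (hθ : θ ∈ Set.Icc (0 : ℝ) 1)
    (r : Set.Icc (0 : ℝ) 1)
    (h1 : |θ - 1 / 2| ≤ 1 / (2 * n) → (r : ℝ) = n * θ - (n - 1) / 2)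
    (h2 : θ < 1 / 2 - 1 / (2 * n) → (r : ℝ) = 0)
    (h3 : 1 / 2 + 1 / (2 * n) < θ → (r : ℝ) = 1) :
    LossAverse (flU n θ) r ∧
      ∀ φ : Set.Icc (0 : ℝ) 1, LossAverse (flU n θ) φ → φ = r := by
  have npos : (0:ℝ) < n := by exact_mod_cast hn
  have hnR : (1:ℝ) ≤ n := by exact_mod_cast hn
  set m : ℝ := n*θ - ((n:ℝ)-1)/2 with hm
  have char : ∀ φ : Set.Icc (0:ℝ) 1, LossAverse (flU n θ) φ ↔
      ∀ c : Set.Icc (0:ℝ) 1, |m - (φ:ℝ)| ≤ |m - (c:ℝ)| := by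
    intro φ
    rw [FLaux.lossAverse_iff hn φ]
    constructor
    · intro h c; exact (FLaux.Fval_le_iff hn φ c).mp (h c)
    · intro h c; exact (FLaux.Fval_le_iff hn φ c).mpr (h c)
  have hr : ∀ c : Set.Icc (0:ℝ) 1, |m - (r:ℝ)| ≤ |m - (c:ℝ)| := by
    have e : (n:ℝ)*(1/2 - 1/(2*n)) = (n:ℝ)/2 - 1/2 := by field_simp
    have e' : (n:ℝ)*(1/2 + 1/(2*n)) = (n:ℝ)/2 + 1/2 := by field_simp
    rcases lt_or_ge θ (1/2 - 1/(2*n)) with hθ1 | hθ1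
    · have hm0 : m < 0 := by
        have := mul_lt_mul_of_pos_left hθ1 npos
        rw [e] at this
        rw [hm]; linarith
      intro c
      have hc0 : 0 ≤ (c:ℝ) := c.2.1
      rw [h2 hθ1, sub_zero, abs_of_neg hm0]
      have := neg_le_abs (m - (c:ℝ))
      linarith
    · rcases lt_or_ge (1/2 + 1/(2*(n:ℝ))) θ with hθ2 | hθ2
      · have hm1 : 1 < m := by
          have := mul_lt_mul_of_pos_left hθ2 npos
          rw [e'] at this
          rw [hm]; linarith
        intro c
        have hc1 : (c:ℝ) ≤ 1 := c.2.2
        rw [h3 hθ2, abs_of_pos (by linarith : (0:ℝ) < m - 1)]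
        have := le_abs_self (m - (c:ℝ))
        linarith
      · have habs : |θ - 1/2| ≤ 1/(2*n) := abs_le.mpr ⟨by linarith, by linarith⟩
        intro c
        rw [h1 habs, sub_self, abs_zero]
        exact abs_nonneg _
  constructor
  · exact (char r).mpr hr
  · intro φ hφ
    have hφ' := (char φ).mp hφ
    have heq : |m - (φ:ℝ)| = |m - (r:ℝ)| := le_antisymm (hφ' r) (hr φ)
    apply Subtype.ext
    rcases le_or_gt 0 m with hm0 | hm0
    · rcases le_or_gt m 1 with hm1 | hm1
      · have hmm : |m - (φ:ℝ)| ≤ 0 := by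
          have := hφ' ⟨m, hm0, hm1⟩
          simpa using this
        have hrr : |m - (r:ℝ)| ≤ 0 := by
          have := hr ⟨m, hm0, hm1⟩
          simpa using this
        have a1 : m - (φ:ℝ) = 0 := abs_eq_zero.mp (le_antisymm hmm (abs_nonneg _))
        have a2 : m - (r:ℝ) = 0 := abs_eq_zero.mp (le_antisymm hrr (abs_nonneg _))
        linarith
      · rw [abs_of_pos (by linarith [φ.2.2] : (0:ℝ) < m - (φ:ℝ)),
            abs_of_pos (by linarith [r.2.2] : (0:ℝ) < m - (r:ℝ))] at heq
        linarith
    · rw [abs_of_neg (by linarith [φ.2.1] : m - (φ:ℝ) < 0),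
          abs_of_neg (by linarith [r.2.1] : m - (r:ℝ) < 0)] at heq
      linarith
end
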